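/- arXiv:2008.05180 — 10 statements merged into one kernel-verified Lean document; each statement's English description precedes it below -/
import Mathlib

section
/- Let G be a vertex-weighted graph with positive weights, let v be a vertex with w(v) ≤ w(u) for all u ∈ N[v], and let G' be the vertex-weighted graph obtained from G by the original weighted struction applied at v. Then α_w(G) = α_w(G') + w(v). -/
/-!
Original weighted struction (Ebenegger et al.): applied at a vertex `v` whose
weight is minimum in its closed neighborhood, it removes `v`, lowers the
weight of every neighbor of `v` by `w v`, and adds a new vertex `v_{x,y}` of
weight `w v` for every pair of non-adjacent neighbors `x < y` of `v`.
The weighted independence number drops by exactly `w v`.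
-/

open scoped Classical

variable {V : Type*}

/-- `I` is an independent set of `G`. -/
def IsIndep (G : SimpleGraph V) (I : Finset V) : Prop :=
  ∀ x ∈ I, ∀ y ∈ I, ¬ G.Adj x y

/-- The weighted independence number of `G` with weights `w`: the supremum
(for a finite graph, the maximum) of the weights of independent sets. -/
noncomputable def alphaW (G : SimpleGraph V) (w : V → ℝ) : ℝ :=
  sSup {r : ℝ | ∃ I : Finset V, IsIndep G I ∧ r = ∑ x ∈ I, w x}

/-- Old vertices of the struction at `v`: all vertices except `v`. -/
abbrev StrOld (v : V) : Type _ := {u : V // u ≠ v}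

/-- New vertices of the struction at `v`: pairs of non-adjacent neighbors
`x < y` of `v` (with respect to the fixed linear order on the vertices). -/
abbrev StrNew [LinearOrder V] (G : SimpleGraph V) (v : V) : Type _ :=
  {p : V × V // G.Adj v p.1 ∧ G.Adj v p.2 ∧ p.1 < p.2 ∧ ¬ G.Adj p.1 p.2}

/-- Adjacency for the original weighted struction at `v`:
old vertices keep the edges of `G`; a new vertex `v_{x,y}` is adjacent to
every old vertex adjacent (in `G`) to `x` or to `y`; two new vertices
`v_{q,x}`, `v_{r,y}` are adjacent whenever `q ≠ r` or `x` and `y` are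
adjacent in `G`. -/
def origRel [LinearOrder V] (G : SimpleGraph V) (v : V) :
    StrOld v ⊕ StrNew G v → StrOld v ⊕ StrNew G v → Prop
  | Sum.inl u, Sum.inl u' => G.Adj u.val u'.val
  | Sum.inl u, Sum.inr p => G.Adj u.val p.val.1 ∨ G.Adj u.val p.val.2
  | Sum.inr p, Sum.inl u => G.Adj u.val p.val.1 ∨ G.Adj u.val p.val.2
  | Sum.inr p, Sum.inr q => p.val.1 ≠ q.val.1 ∨ G.Adj p.val.2 q.val.2

/-- The graph obtained from `G` by the original weighted struction at `v`. -/
def origStruction [LinearOrder V] (G : SimpleGraph V) (v : V) :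
    SimpleGraph (StrOld v ⊕ StrNew G v) :=
  SimpleGraph.fromRel (origRel G v)

/-- Weights after the original struction: neighbors of `v` have their weight
lowered by `w v`, other old vertices keep their weight, and each new vertex
has weight `w v`. -/
noncomputable def origWeight [LinearOrder V] (G : SimpleGraph V) (w : V → ℝ) (v : V) :
    StrOld v ⊕ StrNew G v → ℝ
  | Sum.inl u => if G.Adj v u.val then w u.val - w v else w u.val
  | Sum.inr _ => w v


section Aux
variable {W : Type*} [Fintype W]

omit [Fintype W] in
lemma indep_empty (G : SimpleGraph W) : IsIndep G (∅ : Finset W) := by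
  intro x hx; simp at hx

lemma alphaW_bddAbove (G : SimpleGraph W) (w : W → ℝ) :
    BddAbove {r : ℝ | ∃ I : Finset W, IsIndep G I ∧ r = ∑ x ∈ I, w x} := by
  apply Set.Finite.bddAbove
  apply Set.Finite.subset (Set.finite_range (fun I : Finset W => ∑ x ∈ I, w x))
  rintro r ⟨I, hI, rfl⟩; exact ⟨I, rfl⟩

lemma le_alphaW (G : SimpleGraph W) (w : W → ℝ) (I : Finset W) (hI : IsIndep G I) :
    ∑ x ∈ I, w x ≤ alphaW G w :=
  le_csSup (alphaW_bddAbove G w) ⟨I, hI, rfl⟩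

omit [Fintype W] in
lemma alphaW_le (G : SimpleGraph W) (w : W → ℝ) (c : ℝ)
    (h : ∀ I : Finset W, IsIndep G I → ∑ x ∈ I, w x ≤ c) : alphaW G w ≤ c := by
  refine csSup_le ⟨0, ∅, indep_empty G, by simp⟩ ?_
  rintro r ⟨I, hI, rfl⟩; exact h I hI

end Aux

lemma sum_old_weight {V : Type*} (G : SimpleGraph V) (w : V → ℝ) (v : V) (A : Finset V) :
    ∑ u ∈ A, (if G.Adj v u then w u - w v else w u)
      = ∑ u ∈ A, w u - (A.filter (fun u => G.Adj v u)).card * w v := by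
  have h : ∀ u ∈ A, (if G.Adj v u then w u - w v else w u)
      = w u - (if G.Adj v u then w v else 0) := by intro u _; split <;> ring
  rw [Finset.sum_congr rfl h, Finset.sum_sub_distrib]
  congr 1
  rw [← Finset.sum_filter, Finset.sum_const, nsmul_eq_mul]

/-- the original weighted struction lowers the weighted
independence number by exactly `w v`. -/
theorem original_weighted_struction [Fintype V] [LinearOrder V]
    (G : SimpleGraph V) (w : V → ℝ) (hw : ∀ u, 0 < w u) (v : V)
    (hv : ∀ u, (u = v ∨ G.Adj v u) → w v ≤ w u) :
    alphaW G w = alphaW (origStruction G v) (origWeight G w v) + w v := by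
  apply le_antisymm
  · -- alphaW G w ≤ alphaW G' w' + w v
    apply alphaW_le
    intro I hI
    classical
    set S : Finset V := I.filter (fun u => G.Adj v u) with hSdef
    have holdpf : ∀ u : {x // x ∈ I.filter (fun u => u ≠ v)}, u.val ≠ v :=
      fun u => (Finset.mem_filter.mp u.2).2
    have holdinj : Function.Injective
        (fun u : {x // x ∈ I.filter (fun u => u ≠ v)} =>
          (Sum.inl ⟨u.val, holdpf u⟩ : StrOld v ⊕ StrNew G v)) := by
      intro a b h
      simp only [Sum.inl.injEq, Subtype.mk.injEq] at h
      exact Subtype.ext h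
    set Iold : Finset (StrOld v ⊕ StrNew G v) :=
      (I.filter (fun u => u ≠ v)).attach.map ⟨_, holdinj⟩ with hIolddef
    have hmemold : ∀ z ∈ Iold, ∃ u : StrOld v, u.val ∈ I ∧ z = Sum.inl u := by
      intro z hz
      rw [hIolddef, Finset.mem_map] at hz
      obtain ⟨u, _, rfl⟩ := hz
      exact ⟨⟨u.val, holdpf u⟩, (Finset.mem_filter.mp u.2).1, rfl⟩
    have hsumold : ∑ z ∈ Iold, origWeight G w v z
        = ∑ u ∈ I.filter (fun u => u ≠ v), w u - (S.card : ℝ) * w v := by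
      rw [hIolddef, Finset.sum_map]
      have h1 : ∀ u ∈ (I.filter (fun u => u ≠ v)).attach,
          origWeight G w v ((⟨_, holdinj⟩ : _ ↪ StrOld v ⊕ StrNew G v) u)
            = (fun x => if G.Adj v x then w x - w v else w x) u.val := by
        intro u _; rfl
      rw [Finset.sum_congr rfl h1,
        Finset.sum_attach (I.filter (fun u => u ≠ v))
          (fun x => if G.Adj v x then w x - w v else w x), sum_old_weight]
      have hfe : ((I.filter (fun u => u ≠ v)).filter (fun u => G.Adj v u)) = S := by
        rw [hSdef]
        ext u
        simp only [Finset.mem_filter]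
        constructor
        · rintro ⟨⟨h1, _⟩, h3⟩; exact ⟨h1, h3⟩
        · rintro ⟨h1, h3⟩; exact ⟨⟨h1, fun he => by subst he; exact G.irrefl h3⟩, h3⟩
      rw [hfe]
    rcases S.eq_empty_or_nonempty with hSe | hSne
    · -- no neighbors of v inside I
      have hindep : IsIndep (origStruction G v) Iold := by
        intro a ha b hb hadj
        obtain ⟨ua, hua, rfl⟩ := hmemold a ha
        obtain ⟨ub, hub, rfl⟩ := hmemold b hb
        rw [origStruction, SimpleGraph.fromRel_adj] at hadj
        obtain ⟨-, h | h⟩ := hadj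
        · exact hI ua.val hua ub.val hub h
        · exact hI ub.val hub ua.val hua h
      have hle := le_alphaW (origStruction G v) (origWeight G w v) Iold hindep
      rw [hsumold, hSe] at hle
      simp only [Finset.card_empty, Nat.cast_zero, zero_mul, sub_zero] at hle
      have hfle : ∑ u ∈ I.filter (fun u => u ≠ v), w u ≤ ∑ u ∈ I, w u := by
        apply Finset.sum_le_sum_of_subset_of_nonneg (Finset.filter_subset _ _)
        intro i _ _; exact (hw i).le
      by_cases hvI : v ∈ I
      · have : ∑ u ∈ I.filter (fun u => u ≠ v), w u = ∑ u ∈ I, w u - w v := by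
          have he : I.filter (fun u => u ≠ v) = I.erase v := by
            ext u; simp [Finset.mem_erase, Finset.mem_filter, and_comm]
          rw [he, ← Finset.sum_erase_add I w hvI]; ring
        linarith
      · have : I.filter (fun u => u ≠ v) = I := by
          apply Finset.filter_true_of_mem
          intro u hu he; exact hvI (he ▸ hu)
        rw [this] at hle
        linarith [hw v]
    · -- S nonempty: add new vertices
      set x := S.min' hSne with hxdef
      have hxS : x ∈ S := S.min'_mem hSne
      have hxI : x ∈ I := (Finset.mem_filter.mp hxS).1
      have hadjvx : G.Adj v x := (Finset.mem_filter.mp hxS).2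
      have hvI : v ∉ I := fun h => hI v h x hxI hadjvx
      have hfI : I.filter (fun u => u ≠ v) = I := by
        apply Finset.filter_true_of_mem
        intro u hu he; exact hvI (he ▸ hu)
      have hSsubI : ∀ y ∈ S.erase x, y ∈ I := fun y hy =>
        (Finset.mem_filter.mp (Finset.mem_of_mem_erase hy)).1
      have hpf : ∀ y : {y // y ∈ S.erase x},
          G.Adj v x ∧ G.Adj v y.val ∧ x < y.val ∧ ¬ G.Adj x y.val := by
        intro y
        have hy := y.2
        rw [Finset.mem_erase] at hy
        refine ⟨hadjvx, (Finset.mem_filter.mp hy.2).2, ?_, ?_⟩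
        · exact lt_of_le_of_ne (S.min'_le y.val hy.2) (Ne.symm hy.1)
        · exact hI x hxI y.val (Finset.mem_filter.mp hy.2).1
      have hnewinj : Function.Injective
          (fun y : {y // y ∈ S.erase x} =>
            (Sum.inr ⟨(x, y.val), hpf y⟩ : StrOld v ⊕ StrNew G v)) := by
        intro a b h
        simp only [Sum.inr.injEq, Subtype.mk.injEq, Prod.mk.injEq, true_and] at h
        exact Subtype.ext h
      set Inew : Finset (StrOld v ⊕ StrNew G v) :=
        (S.erase x).attach.map ⟨_, hnewinj⟩ with hInewdef
      have hmemnew : ∀ z ∈ Inew, ∃ p : StrNew G v,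
          z = Sum.inr p ∧ p.val.1 = x ∧ p.val.2 ∈ I ∧ p.val.2 ∈ S.erase x := by
        intro z hz
        rw [hInewdef, Finset.mem_map] at hz
        obtain ⟨y, _, rfl⟩ := hz
        exact ⟨_, rfl, rfl, hSsubI y.val y.2, y.2⟩
      have hdisj : Disjoint Iold Inew := by
        rw [Finset.disjoint_left]
        intro z hzo hzn
        obtain ⟨u, _, rfl⟩ := hmemold z hzo
        obtain ⟨p, hp, -⟩ := hmemnew _ hzn
        exact Sum.inl_ne_inr hp
      have hindep : IsIndep (origStruction G v) (Iold ∪ Inew) := by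
        intro a ha b hb hadj
        rw [origStruction, SimpleGraph.fromRel_adj] at hadj
        obtain ⟨hne, hrel⟩ := hadj
        rw [Finset.mem_union] at ha hb
        rcases ha with ha | ha <;> rcases hb with hb | hb
        · obtain ⟨ua, hua, rfl⟩ := hmemold a ha
          obtain ⟨ub, hub, rfl⟩ := hmemold b hb
          rcases hrel with h | h
          · exact hI ua.val hua ub.val hub h
          · exact hI ub.val hub ua.val hua h
        · obtain ⟨ua, hua, rfl⟩ := hmemold a ha
          obtain ⟨p, rfl, hp1, hp2, -⟩ := hmemnew b hb
          have : G.Adj ua.val p.val.1 ∨ G.Adj ua.val p.val.2 := by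
            rcases hrel with h | h <;> exact h
          rcases this with h | h
          · exact hI ua.val hua x (hp1 ▸ hxI) (hp1 ▸ h)
          · exact hI ua.val hua p.val.2 hp2 h
        · obtain ⟨p, rfl, hp1, hp2, -⟩ := hmemnew a ha
          obtain ⟨ub, hub, rfl⟩ := hmemold b hb
          have : G.Adj ub.val p.val.1 ∨ G.Adj ub.val p.val.2 := by
            rcases hrel with h | h <;> exact h
          rcases this with h | h
          · exact hI ub.val hub x (hp1 ▸ hxI) (hp1 ▸ h)
          · exact hI ub.val hub p.val.2 hp2 h
        · obtain ⟨p, rfl, hp1, hp2, -⟩ := hmemnew a ha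
          obtain ⟨q, rfl, hq1, hq2, -⟩ := hmemnew b hb
          have h12 : p.val.1 = q.val.1 := by rw [hp1, hq1]
          rcases hrel with h | h
          · rcases h with h | h
            · exact h h12
            · exact hI p.val.2 hp2 q.val.2 hq2 h
          · rcases h with h | h
            · exact h h12.symm
            · exact hI q.val.2 hq2 p.val.2 hp2 h
      have hsumnew : ∑ z ∈ Inew, origWeight G w v z = ((S.erase x).card : ℝ) * w v := by
        rw [hInewdef, Finset.sum_map]
        have h1 : ∀ y ∈ (S.erase x).attach,
            origWeight G w v ((⟨_, hnewinj⟩ : _ ↪ StrOld v ⊕ StrNew G v) y) = w v := by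
          intro y _; rfl
        rw [Finset.sum_congr rfl h1, Finset.sum_const, Finset.card_attach,
          nsmul_eq_mul]
      have hle := le_alphaW (origStruction G v) (origWeight G w v) (Iold ∪ Inew) hindep
      rw [Finset.sum_union hdisj, hsumold, hsumnew, hfI] at hle
      have hcard : ((S.erase x).card : ℝ) = (S.card : ℝ) - 1 := by
        rw [Finset.card_erase_of_mem hxS]
        have : 1 ≤ S.card := Finset.card_pos.mpr hSne
        push_cast [this]
        ring
      rw [hcard] at hle
      linarith

  · -- alphaW G' w' + w v ≤ alphaW G w
    have key : alphaW (origStruction G v) (origWeight G w v) ≤ alphaW G w - w v := by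
      apply alphaW_le
      intro I' hI'
      classical
      set Iold := I'.filter (fun z => z.isLeft) with hIolddef
      set Inew := I'.filter (fun z => ¬ z.isLeft) with hInewdef
      have hallold : ∀ z ∈ Iold, ∃ u : StrOld v, z = Sum.inl u ∧ Sum.inl u ∈ I' := by
        intro z hz
        rw [hIolddef, Finset.mem_filter] at hz
        rcases z with u | p
        · exact ⟨u, rfl, hz.1⟩
        · simp at hz
      have hallnew : ∀ z ∈ Inew, ∃ p : StrNew G v, z = Sum.inr p ∧ Sum.inr p ∈ I' := by
        intro z hz
        rw [hInewdef, Finset.mem_filter] at hz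
        rcases z with u | p
        · simp at hz
        · exact ⟨p, rfl, hz.1⟩
      have hsplit : ∑ z ∈ I', origWeight G w v z
          = ∑ z ∈ Iold, origWeight G w v z + ∑ z ∈ Inew, origWeight G w v z :=
        (Finset.sum_filter_add_sum_filter_not I' _ _).symm
      -- the old part as a finset of V
      set f : (StrOld v ⊕ StrNew G v) → V := Sum.elim Subtype.val (fun p => p.val.1)
        with hfdef
      set A : Finset V := Iold.image f with hAdef
      have hfinj : ∀ z ∈ Iold, ∀ z' ∈ Iold, f z = f z' → z = z' := by
        intro z hz z' hz'
        obtain ⟨u, rfl, -⟩ := hallold z hz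
        obtain ⟨u', rfl, -⟩ := hallold z' hz'
        intro h
        simp only [hfdef, Sum.elim_inl] at h
        rw [Subtype.ext h]
      have hmemA : ∀ a ∈ A, ∃ u : StrOld v, u.val = a ∧ Sum.inl u ∈ I' := by
        intro a ha
        rw [hAdef, Finset.mem_image] at ha
        obtain ⟨z, hz, rfl⟩ := ha
        obtain ⟨u, rfl, hu⟩ := hallold z hz
        exact ⟨u, rfl, hu⟩
      have hvA : v ∉ A := by
        intro hva
        obtain ⟨u, hu, -⟩ := hmemA v hva
        exact u.2 hu
      have hAind : ∀ a ∈ A, ∀ b ∈ A, ¬ G.Adj a b := by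
        intro a ha b hb hab
        obtain ⟨u, rfl, hu⟩ := hmemA a ha
        obtain ⟨u', rfl, hu'⟩ := hmemA b hb
        apply hI' _ hu _ hu'
        rw [origStruction, SimpleGraph.fromRel_adj]
        refine ⟨?_, Or.inl hab⟩
        intro h
        rw [Sum.inl.injEq] at h
        exact G.irrefl (h ▸ hab)
      have hsumA : ∑ z ∈ Iold, origWeight G w v z
          = ∑ u ∈ A, w u - ((A.filter (fun u => G.Adj v u)).card : ℝ) * w v := by
        rw [hAdef, ← sum_old_weight, Finset.sum_image hfinj]
        apply Finset.sum_congr rfl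
        intro z hz
        obtain ⟨u, rfl, -⟩ := hallold z hz
        rfl
      have hsumnew : ∑ z ∈ Inew, origWeight G w v z = (Inew.card : ℝ) * w v := by
        rw [Finset.sum_congr rfl (fun z hz => ?_), Finset.sum_const, nsmul_eq_mul]
        obtain ⟨p, rfl, -⟩ := hallnew z hz
        rfl
      rcases Inew.eq_empty_or_nonempty with hIne | hInne
      · -- no new vertices used
        rcases (A.filter (fun u => G.Adj v u)).eq_empty_or_nonempty with hAf | hAf
        · -- no neighbor of v in A : add v
          have hindep : IsIndep G (insert v A) := by
            intro a ha b hb hab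
            rw [Finset.mem_insert] at ha hb
            have hnA : ∀ c ∈ A, ¬ G.Adj v c := by
              intro c hc hvc
              exact Finset.notMem_empty c (hAf ▸ Finset.mem_filter.mpr ⟨hc, hvc⟩)
            rcases ha with rfl | ha <;> rcases hb with rfl | hb
            · exact G.irrefl hab
            · exact hnA b hb hab
            · exact hnA a ha hab.symm
            · exact hAind a ha b hb hab
          have hle := le_alphaW G w (insert v A) hindep
          rw [Finset.sum_insert hvA] at hle
          rw [hsplit, hsumA, hsumnew, hIne, hAf]
          simp only [Finset.card_empty, Nat.cast_zero, zero_mul, sub_zero, add_zero]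
          linarith
        · -- some neighbor of v in A
          have hle := le_alphaW G w A hAind
          rw [hsplit, hsumA, hsumnew, hIne]
          simp only [Finset.card_empty, Nat.cast_zero, zero_mul, add_zero]
          have h1 : (1 : ℝ) ≤ ((A.filter (fun u => G.Adj v u)).card : ℝ) := by
            exact_mod_cast Finset.card_pos.mpr hAf
          nlinarith [hw v]
      · -- new vertices used
        obtain ⟨z₀, hz₀⟩ := hInne
        obtain ⟨p₀, rfl, hp₀⟩ := hallnew z₀ hz₀
        set x := p₀.val.1 with hxdef
        have hpair : ∀ p q : StrNew G v, Sum.inr p ∈ I' → Sum.inr q ∈ I' →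
            p.val.1 = q.val.1 ∧ ¬ G.Adj p.val.2 q.val.2 := by
          intro p q hp hq
          by_cases hpq : p = q
          · subst hpq; exact ⟨rfl, G.irrefl⟩
          · have hna := hI' _ hp _ hq
            rw [origStruction, SimpleGraph.fromRel_adj] at hna
            push_neg at hna
            have hne : (Sum.inr p : StrOld v ⊕ StrNew G v) ≠ Sum.inr q := by
              simpa using hpq
            have h0 := hna hne
            have h1' : ¬ (p.val.1 ≠ q.val.1 ∨ G.Adj p.val.2 q.val.2) := h0.1
            push_neg at h1'
            exact h1'
        set f2 : (StrOld v ⊕ StrNew G v) → V := Sum.elim (fun _ => v) (fun p => p.val.2)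
          with hf2def
        set B : Finset V := insert x (Inew.image f2) with hBdef
        have hmemB2 : ∀ b ∈ Inew.image f2, ∃ p : StrNew G v,
            Sum.inr p ∈ I' ∧ p.val.2 = b ∧ p.val.1 = x := by
          intro b hb
          rw [Finset.mem_image] at hb
          obtain ⟨z, hz, rfl⟩ := hb
          obtain ⟨p, rfl, hp⟩ := hallnew z hz
          exact ⟨p, hp, rfl, (hpair p p₀ hp hp₀).1⟩
        have hmemB : ∀ b ∈ B, b = x ∨ ∃ p : StrNew G v,
            Sum.inr p ∈ I' ∧ p.val.2 = b ∧ p.val.1 = x := by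
          intro b hb
          rw [hBdef, Finset.mem_insert] at hb
          rcases hb with rfl | hb
          · exact Or.inl rfl
          · exact Or.inr (hmemB2 b hb)
        have hBadj : ∀ b ∈ B, G.Adj v b := by
          intro b hb
          rcases hmemB b hb with rfl | ⟨p, -, hb2, -⟩
          · exact p₀.2.1
          · exact hb2 ▸ p.2.2.1
        have hxnot : x ∉ Inew.image f2 := by
          intro hx
          obtain ⟨p, -, hp2, hp1⟩ := hmemB2 x hx
          have hlt := p.2.2.2.1
          rw [hp2, hp1] at hlt
          exact lt_irrefl x hlt
        have hf2inj : ∀ z ∈ Inew, ∀ z' ∈ Inew, f2 z = f2 z' → z = z' := by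
          intro z hz z' hz'
          obtain ⟨p, rfl, hp⟩ := hallnew z hz
          obtain ⟨q, rfl, hq⟩ := hallnew z' hz'
          intro h
          simp only [hf2def, Sum.elim_inr] at h
          have h1 := (hpair p q hp hq).1
          have hpq : p = q := Subtype.ext (Prod.ext h1 h)
          rw [hpq]
        have hcardB : (B.card : ℝ) = (Inew.card : ℝ) + 1 := by
          rw [hBdef, Finset.card_insert_of_notMem hxnot,
            Finset.card_image_of_injOn hf2inj]
          push_cast; ring
        -- independence of A ∪ B
        have hABadj : ∀ a ∈ A, ∀ b ∈ B, ¬ G.Adj a b := by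
          intro a ha b hb hab
          obtain ⟨u, rfl, hu⟩ := hmemA a ha
          have key2 : ∀ p : StrNew G v, Sum.inr p ∈ I' →
              ¬ (G.Adj u.val p.val.1 ∨ G.Adj u.val p.val.2) := by
            intro p hp hor
            apply hI' _ hu _ hp
            rw [origStruction, SimpleGraph.fromRel_adj]
            exact ⟨by simp, Or.inl hor⟩
          rcases hmemB b hb with rfl | ⟨p, hp, hb2, -⟩
          · exact key2 p₀ hp₀ (Or.inl hab)
          · exact key2 p hp (Or.inr (hb2 ▸ hab))
        have hBBadj : ∀ b ∈ B, ∀ b' ∈ B, ¬ G.Adj b b' := by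
          intro b hb b' hb' hbb
          rcases hmemB b hb with rfl | ⟨p, hp, hb2, hb1⟩ <;>
            rcases hmemB b' hb' with h' | ⟨q, hq, hb2', hb1'⟩
          · exact G.irrefl (h' ▸ hbb)
          · -- x vs q.2 : x = q.1
            have hq2 := q.2.2.2.2
            rw [hb1', hb2'] at hq2
            exact hq2 hbb
          · -- p.2 vs x
            subst h'
            have hp2 := p.2.2.2.2
            rw [hb1, hb2] at hp2
            exact hp2 hbb.symm
          · -- p.2 vs q.2
            rw [← hb2, ← hb2'] at hbb
            exact (hpair p q hp hq).2 hbb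
        have hindep : IsIndep G (A ∪ B) := by
          intro a ha b hb hab
          rw [Finset.mem_union] at ha hb
          rcases ha with ha | ha <;> rcases hb with hb | hb
          · exact hAind a ha b hb hab
          · exact hABadj a ha b hb hab
          · exact hABadj b hb a ha hab.symm
          · exact hBBadj a ha b hb hab
        have hle := le_alphaW G w (A ∪ B) hindep
        -- counting
        have hsum_union : ∑ u ∈ A ∪ B, w u = ∑ u ∈ A, w u + ∑ u ∈ B \ A, w u := by
          rw [← Finset.union_sdiff_self_eq_union, Finset.sum_union Finset.sdiff_disjoint.symm]
        have hBA_lb : ((B \ A).card : ℝ) * w v ≤ ∑ u ∈ B \ A, w u := by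
          rw [← nsmul_eq_mul]
          apply Finset.card_nsmul_le_sum
          intro b hb
          exact hv b (Or.inr (hBadj b (Finset.mem_sdiff.mp hb).1))
        have hcards : ((B \ A).card : ℝ) + ((B ∩ A).card : ℝ) = (B.card : ℝ) := by
          exact_mod_cast congrArg (Nat.cast : ℕ → ℝ) (Finset.card_sdiff_add_card_inter B A)
        have hBcapA : ((B ∩ A).card : ℝ) ≤ ((A.filter (fun u => G.Adj v u)).card : ℝ) := by
          have hsub : B ∩ A ⊆ A.filter (fun u => G.Adj v u) := by
            intro b hb
            rw [Finset.mem_inter] at hb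
            exact Finset.mem_filter.mpr ⟨hb.2, hBadj b hb.1⟩
          exact_mod_cast Finset.card_le_card hsub
        have hmul : (((B.card : ℝ)) - ((A.filter (fun u => G.Adj v u)).card : ℝ)) * w v
            ≤ ((B \ A).card : ℝ) * w v := by
          apply mul_le_mul_of_nonneg_right _ (hw v).le
          linarith
        rw [hsum_union] at hle
        rw [hsplit, hsumA, hsumnew]
        nlinarith [hw v]
    linarith
end

section
/- Let G be a vertex-weighted graph with positive weights, let v be an arbitrary vertex of G, and let G' be the vertex-weighted graph obtained from G by the extended weighted struction applied at v. Then α_w(G) = α_w(G') + w(v). -/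
/-!
Extended weighted struction: applied at an arbitrary vertex `v`.  It removes
`v` together with its whole neighborhood `N(v)`, and adds, for every
independent set `c` of `G[N(v)]` with `w(c) > w(v)`, a new vertex `v_c` of
weight `w(c) - w(v)`; `v_c` is adjacent to every remaining vertex adjacent
in `G` to some vertex of `c`, and the new vertices form a clique.
-/

open scoped Classical

variable {V : Type*}

/-- Old vertices of the extended struction at `v`: the vertices outside the
closed neighborhood `N[v]`. -/
abbrev ExtOld (G : SimpleGraph V) (v : V) : Type _ :=
  {u : V // u ≠ v ∧ ¬ G.Adj v u}

/-- New vertices of the extended struction at `v`: the independent sets `c`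
of the induced subgraph `G[N(v)]` with `w(c) > w(v)`. -/
abbrev ExtNew (G : SimpleGraph V) (w : V → ℝ) (v : V) : Type _ :=
  {c : Finset V // (∀ x ∈ c, G.Adj v x) ∧ IsIndep G c ∧ w v < ∑ x ∈ c, w x}

/-- Adjacency for the extended weighted struction at `v`:
old vertices keep the edges of `G`; a new vertex `v_c` is adjacent to every
old vertex adjacent in `G` to at least one vertex of `c`; the new vertices
form a clique. -/
def extRel (G : SimpleGraph V) (w : V → ℝ) (v : V) :
    ExtOld G v ⊕ ExtNew G w v → ExtOld G v ⊕ ExtNew G w v → Prop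
  | Sum.inl u, Sum.inl u' => G.Adj u.val u'.val
  | Sum.inl u, Sum.inr c => ∃ x ∈ c.val, G.Adj u.val x
  | Sum.inr c, Sum.inl u => ∃ x ∈ c.val, G.Adj u.val x
  | Sum.inr _, Sum.inr _ => True

/-- The graph obtained from `G` by the extended weighted struction at `v`. -/
def extStruction (G : SimpleGraph V) (w : V → ℝ) (v : V) :
    SimpleGraph (ExtOld G v ⊕ ExtNew G w v) :=
  SimpleGraph.fromRel (extRel G w v)

/-- Weights after the extended struction: old vertices keep their weight and
each new vertex `v_c` has weight `w(c) - w(v)`. -/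
noncomputable def extWeight (G : SimpleGraph V) (w : V → ℝ) (v : V) :
    ExtOld G v ⊕ ExtNew G w v → ℝ
  | Sum.inl u => w u.val
  | Sum.inr c => (∑ x ∈ c.val, w x) - w v

/-- The old vertices of a set `I'` of struction vertices, seen back in `V`. -/
noncomputable def extOldBack (G : SimpleGraph V) (w : V → ℝ) (v : V) [Fintype V]
    (I' : Finset (ExtOld G v ⊕ ExtNew G w v)) : Finset V :=
  Finset.univ.filter fun y =>
    ∃ h : y ≠ v ∧ ¬ G.Adj v y, Sum.inl (⟨y, h⟩ : ExtOld G v) ∈ I'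

lemma alphaW_spec [Fintype V] (G : SimpleGraph V) (w : V → ℝ) :
    (∃ I : Finset V, IsIndep G I ∧ alphaW G w = ∑ x ∈ I, w x) ∧
    ∀ I : Finset V, IsIndep G I → ∑ x ∈ I, w x ≤ alphaW G w := by
  classical
  set S := {r : ℝ | ∃ I : Finset V, IsIndep G I ∧ r = ∑ x ∈ I, w x} with hS
  have hfin : S.Finite := by
    apply Set.Finite.subset (Set.finite_range (fun I : Finset V => ∑ x ∈ I, w x))
    rintro r ⟨I, -, rfl⟩; exact ⟨I, rfl⟩
  have hne : S.Nonempty := ⟨0, ∅, fun x hx => absurd hx (Finset.notMem_empty x), by simp⟩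
  exact ⟨Set.Nonempty.csSup_mem hne hfin, fun I hI => le_csSup hfin.bddAbove ⟨I, hI, rfl⟩⟩

lemma extStruction_adj (G : SimpleGraph V) (w : V → ℝ) (v : V)
    {a b : ExtOld G v ⊕ ExtNew G w v} :
    (extStruction G w v).Adj a b ↔ a ≠ b ∧ (extRel G w v a b ∨ extRel G w v b a) := by
  simp [extStruction, SimpleGraph.fromRel_adj]

lemma dirA [Fintype V] (G : SimpleGraph V) (w : V → ℝ) (v : V)
    (I' : Finset (ExtOld G v ⊕ ExtNew G w v))
    (hI' : IsIndep (extStruction G w v) I') :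
    ∃ I : Finset V, IsIndep G I ∧ ∑ x ∈ I, w x = (∑ a ∈ I', extWeight G w v a) + w v := by
  classical
  set O : Finset V := I'.toLeft.image Subtype.val with hOdef
  have hOmem : ∀ y ∈ O, ∃ h : y ≠ v ∧ ¬ G.Adj v y, Sum.inl (⟨y, h⟩ : ExtOld G v) ∈ I' := by
    intro y hy
    obtain ⟨u, hu, rfl⟩ := Finset.mem_image.mp hy
    exact ⟨u.2, by rwa [← Finset.mem_toLeft]⟩
  have hOO : ∀ x ∈ O, ∀ y ∈ O, ¬ G.Adj x y := by
    intro x hx y hy hadj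
    obtain ⟨hxp, hxI⟩ := hOmem x hx
    obtain ⟨hyp, hyI⟩ := hOmem y hy
    refine hI' _ hxI _ hyI ((extStruction_adj G w v).mpr ⟨?_, Or.inl hadj⟩)
    intro h
    rw [Sum.inl.injEq, Subtype.mk.injEq] at h
    exact G.ne_of_adj hadj h
  have hsumI' : ∑ a ∈ I', extWeight G w v a
      = (∑ u ∈ I'.toLeft, w u.val) + ∑ c ∈ I'.toRight, ((∑ x ∈ c.val, w x) - w v) := by
    rw [← Finset.toLeft_disjSum_toRight (u := I'), Finset.sum_disjSum]
    simp [Finset.toLeft_disjSum_toRight, extWeight]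
  have hsumO : ∑ u ∈ I'.toLeft, w u.val = ∑ y ∈ O, w y := by
    rw [hOdef, Finset.sum_image]
    intro a _ b _ h
    exact Subtype.ext h
  by_cases hR : I'.toRight = ∅
  · refine ⟨insert v O, ?_, ?_⟩
    · intro x hx y hy hadj
      rcases Finset.mem_insert.mp hx with rfl | hx <;>
        rcases Finset.mem_insert.mp hy with rfl | hy
      · exact G.irrefl hadj
      · exact (hOmem y hy).1.2 hadj
      · exact (hOmem x hx).1.2 hadj.symm
      · exact hOO x hx y hy hadj
    · have hvO : v ∉ O := fun h => (hOmem v h).1.1 rfl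
      rw [Finset.sum_insert hvO, hsumI', hR, hsumO]
      simp [add_comm]
  · obtain ⟨c, hc⟩ := Finset.nonempty_iff_ne_empty.mpr hR
    have hcI' : Sum.inr c ∈ I' := Finset.mem_toRight.mp hc
    have hRsingle : I'.toRight = {c} := by
      apply Finset.eq_singleton_iff_unique_mem.mpr
      refine ⟨hc, fun c' hc' => ?_⟩
      by_contra hne
      refine hI' _ (Finset.mem_toRight.mp hc') _ hcI'
        ((extStruction_adj G w v).mpr ⟨?_, Or.inl trivial⟩)
      intro h
      exact hne (Sum.inr.injEq _ _ ▸ h)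
    have hdisj : Disjoint O c.val := by
      rw [Finset.disjoint_left]
      intro y hy hyc
      exact (hOmem y hy).1.2 (c.2.1 y hyc)
    refine ⟨O ∪ c.val, ?_, ?_⟩
    · intro x hx y hy hadj
      rcases Finset.mem_union.mp hx with hx | hx <;>
        rcases Finset.mem_union.mp hy with hy | hy
      · exact hOO x hx y hy hadj
      · obtain ⟨hxp, hxI⟩ := hOmem x hx
        exact hI' _ hxI _ hcI'
          ((extStruction_adj G w v).mpr ⟨by simp, Or.inl ⟨y, hy, hadj⟩⟩)
      · obtain ⟨hyp, hyI⟩ := hOmem y hy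
        exact hI' _ hyI _ hcI'
          ((extStruction_adj G w v).mpr ⟨by simp, Or.inl ⟨x, hx, hadj.symm⟩⟩)
      · exact c.2.2.1 x hx y hy hadj
    · rw [Finset.sum_union hdisj, hsumI', hRsingle, hsumO]
      simp
      ring

lemma dirB [Fintype V] (G : SimpleGraph V) (w : V → ℝ) (hw : ∀ u, 0 < w u) (v : V)
    (I : Finset V) (hI : IsIndep G I) :
    ∃ I' : Finset (ExtOld G v ⊕ ExtNew G w v),
      IsIndep (extStruction G w v) I' ∧
      ∑ x ∈ I, w x ≤ (∑ a ∈ I', extWeight G w v a) + w v := by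
  classical
  set cset : Finset V := I.filter (fun y => G.Adj v y) with hcdef
  set Oset : Finset V := I.filter (fun y => y ≠ v ∧ ¬ G.Adj v y) with hOdef
  have hOprop : ∀ y ∈ Oset, y ≠ v ∧ ¬ G.Adj v y := fun y hy => (Finset.mem_filter.mp hy).2
  set oldI' : Finset (ExtOld G v ⊕ ExtNew G w v) :=
    Oset.attach.image (fun y =>
      (Sum.inl ⟨y.1, hOprop y.1 y.2⟩ : ExtOld G v ⊕ ExtNew G w v)) with holdDef
  have holdMem : ∀ a ∈ oldI', ∃ u : ExtOld G v, a = Sum.inl u ∧ u.val ∈ I := by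
    intro a ha
    obtain ⟨y, hy, rfl⟩ := Finset.mem_image.mp ha
    exact ⟨_, rfl, (Finset.mem_filter.mp y.2).1⟩
  have holdIndep : IsIndep (extStruction G w v) oldI' := by
    intro a ha b hb hadj
    obtain ⟨u, rfl, huI⟩ := holdMem a ha
    obtain ⟨u', rfl, huI'⟩ := holdMem b hb
    rcases ((extStruction_adj G w v).mp hadj).2 with h | h
    · exact hI _ huI _ huI' h
    · exact hI _ huI' _ huI h
  have holdSum : ∑ a ∈ oldI', extWeight G w v a = ∑ y ∈ Oset, w y := by
    have h1 : ∑ a ∈ oldI', extWeight G w v a = ∑ y ∈ Oset.attach, w y.1 := by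
      rw [holdDef]
      exact Finset.sum_image (by intro a _ b _ h; simp only [Sum.inl.injEq, Subtype.mk.injEq] at h; exact Subtype.ext h)
    rw [h1, Finset.sum_attach Oset (fun y => w y)]
  have hOnonneg : (0:ℝ) ≤ ∑ y ∈ Oset, w y := Finset.sum_nonneg fun y _ => (hw y).le
  by_cases hcase : ∑ x ∈ cset, w x ≤ w v
  · refine ⟨oldI', holdIndep, ?_⟩
    rw [holdSum]
    by_cases hv : v ∈ I
    · have hsub : I ⊆ insert v Oset := by
        intro y hy
        rcases eq_or_ne y v with rfl | hne
        · exact Finset.mem_insert_self _ _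
        · refine Finset.mem_insert_of_mem (Finset.mem_filter.mpr ⟨hy, hne, fun h => ?_⟩)
          exact hI v hv y hy h
      calc ∑ x ∈ I, w x ≤ ∑ x ∈ insert v Oset, w x :=
            Finset.sum_le_sum_of_subset_of_nonneg hsub (fun y _ _ => (hw y).le)
        _ = w v + ∑ y ∈ Oset, w y := Finset.sum_insert (by simp [hOdef])
        _ = (∑ y ∈ Oset, w y) + w v := add_comm _ _
    · have hsub : I ⊆ Oset ∪ cset := by
        intro y hy
        by_cases hadj : G.Adj v y
        · exact Finset.mem_union_right _ (Finset.mem_filter.mpr ⟨hy, hadj⟩)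
        · refine Finset.mem_union_left _ (Finset.mem_filter.mpr ⟨hy, fun h => hv (h ▸ hy), hadj⟩)
      have hdisj : Disjoint Oset cset := by
        rw [Finset.disjoint_left]
        intro y hy hyc
        exact (Finset.mem_filter.mp hy).2.2 (Finset.mem_filter.mp hyc).2
      calc ∑ x ∈ I, w x ≤ ∑ x ∈ Oset ∪ cset, w x :=
            Finset.sum_le_sum_of_subset_of_nonneg hsub (fun y _ _ => (hw y).le)
        _ = (∑ y ∈ Oset, w y) + ∑ y ∈ cset, w y := Finset.sum_union hdisj
        _ ≤ (∑ y ∈ Oset, w y) + w v := by linarith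
  · push_neg at hcase
    have hv : v ∉ I := by
      intro hv
      have : cset = ∅ := by
        rw [hcdef, Finset.filter_eq_empty_iff]
        intro y hy hadj
        exact hI v hv y hy hadj
      rw [this] at hcase
      simp at hcase
      exact absurd hcase (not_lt.mpr (hw v).le)
    have hcIndep : IsIndep G cset := fun x hx y hy =>
      hI x (Finset.mem_filter.mp hx).1 y (Finset.mem_filter.mp hy).1
    set c : ExtNew G w v :=
      ⟨cset, fun x hx => (Finset.mem_filter.mp hx).2, hcIndep, hcase⟩ with hcDef
    have hcnot : (Sum.inr c : ExtOld G v ⊕ ExtNew G w v) ∉ oldI' := by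
      intro h
      obtain ⟨u, hu, -⟩ := holdMem _ h
      exact Sum.inl_ne_inr hu.symm
    refine ⟨insert (Sum.inr c) oldI', ?_, ?_⟩
    · intro a ha b hb hadj
      rcases Finset.mem_insert.mp ha with rfl | ha <;>
        rcases Finset.mem_insert.mp hb with rfl | hb
      · exact (extStruction G w v).irrefl hadj
      · obtain ⟨u, rfl, huI⟩ := holdMem b hb
        rcases ((extStruction_adj G w v).mp hadj).2 with ⟨x, hx, hux⟩ | ⟨x, hx, hux⟩ <;>
          exact hI _ huI _ (Finset.mem_filter.mp hx).1 hux
      · obtain ⟨u, rfl, huI⟩ := holdMem a ha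
        rcases ((extStruction_adj G w v).mp hadj).2 with ⟨x, hx, hux⟩ | ⟨x, hx, hux⟩ <;>
          exact hI _ huI _ (Finset.mem_filter.mp hx).1 hux
      · exact holdIndep a ha b hb hadj
    · rw [Finset.sum_insert hcnot, holdSum]
      have hsub : I ⊆ Oset ∪ cset := by
        intro y hy
        by_cases hadj : G.Adj v y
        · exact Finset.mem_union_right _ (Finset.mem_filter.mpr ⟨hy, hadj⟩)
        · refine Finset.mem_union_left _
            (Finset.mem_filter.mpr ⟨hy, fun h => hv (h ▸ hy), hadj⟩)
      have hdisj : Disjoint Oset cset := by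
        rw [Finset.disjoint_left]
        intro y hy hyc
        exact (Finset.mem_filter.mp hy).2.2 (Finset.mem_filter.mp hyc).2
      have : ∑ x ∈ I, w x ≤ (∑ y ∈ Oset, w y) + ∑ y ∈ cset, w y := by
        calc ∑ x ∈ I, w x ≤ ∑ x ∈ Oset ∪ cset, w x :=
              Finset.sum_le_sum_of_subset_of_nonneg hsub (fun y _ _ => (hw y).le)
          _ = _ := Finset.sum_union hdisj
      have hew : extWeight G w v (Sum.inr c) = (∑ x ∈ cset, w x) - w v := rfl
      rw [hew]
      linarith

/-- the extended weighted struction lowers the weighted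
independence number by exactly `w v`. -/
theorem extended_weighted_struction [Fintype V]
    (G : SimpleGraph V) (w : V → ℝ) (hw : ∀ u, 0 < w u) (v : V) :
    alphaW G w = alphaW (extStruction G w v) (extWeight G w v) + w v := by
  obtain ⟨⟨Imax, hImax, hEq⟩, hub⟩ := alphaW_spec G w
  obtain ⟨⟨I'max, hI'max, hEq'⟩, hub'⟩ := alphaW_spec (extStruction G w v) (extWeight G w v)
  apply le_antisymm
  · obtain ⟨I', hI'indep, hle⟩ := dirB G w hw v Imax hImax
    rw [hEq]
    calc ∑ x ∈ Imax, w x ≤ (∑ a ∈ I', extWeight G w v a) + w v := hle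
      _ ≤ _ := by linarith [hub' I' hI'indep]
  · obtain ⟨I, hIindep, heq⟩ := dirA G w v I'max hI'max
    rw [hEq', ← heq]
    exact hub I hIindep
end

section
/- Let G be a vertex-weighted graph with positive weights, let v be a vertex of G, and let G' be obtained from G by the extended weighted struction at v. If I is an independent set of G with v ∈ I, then I \ {v} is an independent set of G' and its weight in G' equals w(I) − w(v). -/
/-!
Extended weighted struction: applied at an arbitrary vertex `v`.  It removes
`v` together with its whole neighborhood `N(v)`, and adds, for every
independent set `c` of `G[N(v)]` with `w(c) > w(v)`, a new vertex `v_c` of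
weight `w(c) - w(v)`; `v_c` is adjacent to every remaining vertex adjacent
in `G` to some vertex of `c`, and the new vertices form a clique.
-/

open scoped Classical

variable {V : Type*}

/-- if `I` is an independent set of `G` containing `v`, then
`I \ {v}` (viewed inside the struction graph; its vertices all avoid `N[v]`)
is an independent set of the extended struction graph `G'`, of weight
`w(I) - w(v)` there. -/
theorem extended_struction_erase_center [Fintype V]
    (G : SimpleGraph V) (w : V → ℝ) (hw : ∀ u, 0 < w u) (v : V)
    (I : Finset V) (hI : IsIndep G I) (hvI : v ∈ I) :
    IsIndep (extStruction G w v)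
        (Finset.univ.filter
          (Sum.elim (fun u : ExtOld G v => u.val ∈ I) (fun _ : ExtNew G w v => False))) ∧
      ∑ a ∈ Finset.univ.filter
          (Sum.elim (fun u : ExtOld G v => u.val ∈ I) (fun _ : ExtNew G w v => False)),
          extWeight G w v a = (∑ x ∈ I, w x) - w v := by
  constructor
  · intro x hx y hy hxy
    simp only [Finset.mem_filter] at hx hy
    match x, y with
    | Sum.inl u, Sum.inl u' =>
      simp only [Sum.elim_inl] at hx hy
      have : G.Adj u.val u'.val := by
        rcases hxy.2 with h | h
        · exact h
        · exact h.symm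
      exact hI u.val hx.2 u'.val hy.2 this
    | Sum.inl u, Sum.inr c => exact hy.2.elim
    | Sum.inr c, _ => exact hx.2.elim
  · rw [show (∑ x ∈ I, w x) - w v = ∑ x ∈ I.erase v, w x by
      rw [← Finset.sum_erase_add I w hvI]; ring]
    symm
    apply Finset.sum_bij (fun (x : V) (hx : x ∈ I.erase v) =>
      (Sum.inl ⟨x, by
        refine ⟨Finset.ne_of_mem_erase hx, fun hadj => ?_⟩
        exact hI v hvI x (Finset.mem_of_mem_erase hx) hadj⟩ :
        ExtOld G v ⊕ ExtNew G w v))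
    · intro a ha
      simp only [Finset.mem_filter, Finset.mem_univ, Sum.elim_inl, true_and]
      exact Finset.mem_of_mem_erase ha
    · intro a ha b hb h
      simpa using congrArg (Sum.elim Subtype.val (fun _ => v)) h
    · intro b hb
      match b, hb with
      | Sum.inl u, hb =>
        simp only [Finset.mem_filter, Finset.mem_univ, Sum.elim_inl, true_and] at hb
        exact ⟨u.val, Finset.mem_erase.2 ⟨u.prop.1, hb⟩, rfl⟩
      | Sum.inr c, hb => simp at hb
    · intro a ha
      rfl
end

section
/- Let G be a vertex-weighted graph with positive weights, let v be a vertex of G, and let G' be obtained from G by the extended weighted struction at v. Let I be an independent set of G with v ∉ I and w(I ∩ N(v)) > w(v), and set c = I ∩ N(v), so that c ∈ C. Then (I \ c) ∪ {v_c} is an independent set of G' and its weight in G' equals w(I) − w(v). -/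
/-!
Extended weighted struction: applied at an arbitrary vertex `v`.  It removes
`v` together with its whole neighborhood `N(v)`, and adds, for every
independent set `c` of `G[N(v)]` with `w(c) > w(v)`, a new vertex `v_c` of
weight `w(c) - w(v)`; `v_c` is adjacent to every remaining vertex adjacent
in `G` to some vertex of `c`, and the new vertices form a clique.
-/

open scoped Classical

variable {V : Type*}

/-- let `I` be independent in `G` with `v ∉ I` and
`w(I ∩ N(v)) > w(v)`, and set `c = I ∩ N(v)` (so `c ∈ C`).  Then
`(I \ c) ∪ {v_c}` is an independent set of the extended struction graph
`G'`, of weight `w(I) - w(v)` there. -/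
theorem extended_struction_swap_neighborhood [Fintype V]
    (G : SimpleGraph V) (w : V → ℝ) (hw : ∀ u, 0 < w u) (v : V)
    (I : Finset V) (hI : IsIndep G I) (hvI : v ∉ I)
    (hgt : w v < ∑ x ∈ I.filter (fun y => G.Adj v y), w x) :
    IsIndep (extStruction G w v)
        (Finset.univ.filter
          (Sum.elim (fun u : ExtOld G v => u.val ∈ I)
            (fun c : ExtNew G w v => c.val = I.filter fun y => G.Adj v y))) ∧
      ∑ a ∈ Finset.univ.filter
          (Sum.elim (fun u : ExtOld G v => u.val ∈ I)
            (fun c : ExtNew G w v => c.val = I.filter fun y => G.Adj v y)),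
          extWeight G w v a = (∑ x ∈ I, w x) - w v := by
  classical
  set c₀ : Finset V := I.filter (fun y => G.Adj v y) with hc₀
  have hc₀I : c₀ ⊆ I := Finset.filter_subset _ _
  constructor
  · intro a ha b hb hadj
    simp only [Finset.mem_filter] at ha hb
    rw [extStruction, SimpleGraph.fromRel_adj] at hadj
    obtain ⟨hne, hrel⟩ := hadj
    match a, b, ha, hb with
    | Sum.inl u, Sum.inl u', ⟨_, hu⟩, ⟨_, hu'⟩ =>
      rcases hrel with h | h
      · exact hI _ hu _ hu' h
      · exact hI _ hu' _ hu h
    | Sum.inl u, Sum.inr c, ⟨_, hu⟩, ⟨_, hc⟩ =>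
      have : ∃ x ∈ c.val, G.Adj u.val x := by
        rcases hrel with h | h <;> exact h
      obtain ⟨x, hx, hax⟩ := this
      rw [hc] at hx
      exact hI _ hu _ (hc₀I hx) hax
    | Sum.inr c, Sum.inl u, ⟨_, hc⟩, ⟨_, hu⟩ =>
      have : ∃ x ∈ c.val, G.Adj u.val x := by
        rcases hrel with h | h <;> exact h
      obtain ⟨x, hx, hax⟩ := this
      rw [hc] at hx
      exact hI _ hu _ (hc₀I hx) hax
    | Sum.inr c, Sum.inr c', ⟨_, hc⟩, ⟨_, hc'⟩ =>
      exact hne (by rw [Subtype.ext (hc.trans hc'.symm)])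
  · have hmem : (∀ x ∈ c₀, G.Adj v x) ∧ IsIndep G c₀ ∧ w v < ∑ x ∈ c₀, w x := by
      refine ⟨fun x hx => (Finset.mem_filter.mp hx).2,
        fun x hx y hy => hI _ (hc₀I hx) _ (hc₀I hy), hgt⟩
    set cnew : ExtNew G w v := ⟨c₀, hmem⟩ with hcnew
    rw [Finset.sum_filter, Fintype.sum_sum_type]
    have h1 : ∑ u : ExtOld G v,
        (if Sum.elim (fun u : ExtOld G v => u.val ∈ I)
            (fun c : ExtNew G w v => c.val = c₀) (Sum.inl u)
          then extWeight G w v (Sum.inl u) else 0)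
        = ∑ x ∈ I.filter (fun y => ¬ G.Adj v y), w x := by
      have step : ∑ u : ExtOld G v,
          (if Sum.elim (fun u : ExtOld G v => u.val ∈ I)
              (fun c : ExtNew G w v => c.val = c₀) (Sum.inl u)
            then extWeight G w v (Sum.inl u) else 0)
          = ∑ u : ExtOld G v, (if u.val ∈ I then w u.val else 0) :=
        Finset.sum_congr rfl fun u _ => by simp [extWeight]; congr
      rw [step, ← Finset.sum_subtype (Finset.univ.filter
          (fun x => x ≠ v ∧ ¬ G.Adj v x))
          (by simp) (fun x => if x ∈ I then w x else 0)]
      rw [Finset.sum_filter, Finset.sum_filter, ← Finset.univ_inter I,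
        ← Finset.sum_ite_mem]
      refine Finset.sum_congr rfl fun x _ => ?_
      by_cases hxI : x ∈ I
      · have hxv : x ≠ v := fun h => hvI (h ▸ hxI)
        by_cases hadj : G.Adj v x <;> simp [hxI, hxv, hadj]
      · simp [hxI]
    have h2 : ∑ c : ExtNew G w v,
        (if Sum.elim (fun u : ExtOld G v => u.val ∈ I)
            (fun c : ExtNew G w v => c.val = c₀) (Sum.inr c)
          then extWeight G w v (Sum.inr c) else 0)
        = (∑ x ∈ c₀, w x) - w v := by
      have : ∀ c : ExtNew G w v, (c.val = c₀) = (c = cnew) := by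
        intro c; simp [hcnew, Subtype.ext_iff]
      simp only [Sum.elim_inr, this]
      rw [Finset.sum_ite_eq' Finset.univ cnew]
      simp [extWeight]; rfl
    rw [h1, h2, ← Finset.sum_filter_add_sum_filter_not I (fun y => G.Adj v y) w]
    ring
end

section
/- Let G be a vertex-weighted graph with positive weights, let v be a vertex of G, and let G' be obtained from G by the extended weighted struction at v. For every independent set I of G there exists an independent set I' of G' whose weight in G' is at least w(I) − w(v); consequently α_w(G') ≥ α_w(G) − w(v). -/
/-!
Extended weighted struction: applied at an arbitrary vertex `v`.  It removes
`v` together with its whole neighborhood `N(v)`, and adds, for every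
independent set `c` of `G[N(v)]` with `w(c) > w(v)`, a new vertex `v_c` of
weight `w(c) - w(v)`; `v_c` is adjacent to every remaining vertex adjacent
in `G` to some vertex of `c`, and the new vertices form a clique.
-/

open scoped Classical

variable {V : Type*}

/-- for every independent set `I` of `G` there is an independent
set `I'` of the extended struction graph `G'` whose weight in `G'` is at
least `w(I) - w(v)`; consequently `α_w(G') ≥ α_w(G) - w(v)`. -/
theorem extended_struction_upper_bound [Fintype V]
    (G : SimpleGraph V) (w : V → ℝ) (hw : ∀ u, 0 < w u) (v : V) :
    (∀ I : Finset V, IsIndep G I →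
        ∃ I' : Finset (ExtOld G v ⊕ ExtNew G w v), IsIndep (extStruction G w v) I' ∧
          (∑ x ∈ I, w x) - w v ≤ ∑ a ∈ I', extWeight G w v a) ∧
      alphaW G w - w v ≤ alphaW (extStruction G w v) (extWeight G w v) := by
  classical
  -- Part 1: the pointwise statement.
  have key : ∀ I : Finset V, IsIndep G I →
      ∃ I' : Finset (ExtOld G v ⊕ ExtNew G w v), IsIndep (extStruction G w v) I' ∧
        (∑ x ∈ I, w x) - w v ≤ ∑ a ∈ I', extWeight G w v a := by
    intro I hI
    set P : V → Prop := fun y => y ≠ v ∧ ¬ G.Adj v y with hP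
    set c : Finset V := I.filter (fun y => G.Adj v y) with hc
    -- old part of the candidate independent set
    set Iold : Finset (ExtOld G v ⊕ ExtNew G w v) :=
      (I.subtype P).map ⟨Sum.inl, Sum.inl_injective⟩ with hIold
    have memIold : ∀ a, a ∈ Iold ↔ ∃ u : ExtOld G v, a = Sum.inl u ∧ u.val ∈ I := by
      intro a
      constructor
      · intro ha
        rw [hIold, Finset.mem_map] at ha
        obtain ⟨u, hu, rfl⟩ := ha
        exact ⟨u, rfl, (Finset.mem_subtype.mp hu)⟩
      · rintro ⟨u, rfl, hu⟩
        rw [hIold, Finset.mem_map]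
        exact ⟨u, Finset.mem_subtype.mpr hu, rfl⟩
    have sumIold : ∑ a ∈ Iold, extWeight G w v a = ∑ x ∈ I.filter P, w x := by
      rw [hIold, Finset.sum_map]
      exact Finset.sum_subtype_eq_sum_filter (fun x => w x) (p := P) (s := I)
    have hIoldIndep : IsIndep (extStruction G w v) Iold := by
      intro x hx y hy hadj
      obtain ⟨u, rfl, hu⟩ := (memIold x).mp hx
      obtain ⟨u', rfl, hu'⟩ := (memIold y).mp hy
      rw [extStruction, SimpleGraph.fromRel_adj] at hadj
      obtain ⟨-, h | h⟩ := hadj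
      · exact hI _ hu _ hu' h
      · exact hI _ hu' _ hu h
    have hsplit : ∑ x ∈ I, w x
        = ∑ x ∈ I.filter P, w x + ∑ x ∈ I.filter (fun y => ¬ P y), w x :=
      (Finset.sum_filter_add_sum_filter_not I P _).symm
    have hcadj : ∀ x ∈ c, G.Adj v x := fun x hx => (Finset.mem_filter.mp hx).2
    have hcsub : ∀ x ∈ c, x ∈ I := fun x hx => (Finset.mem_filter.mp hx).1
    by_cases hcw : w v < ∑ x ∈ c, w x
    · -- use the new vertex corresponding to `c`
      have hcindep : IsIndep G c := fun x hx y hy =>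
        hI x (hcsub x hx) y (hcsub y hy)
      set cc : ExtNew G w v := ⟨c, hcadj, hcindep, hcw⟩ with hcc
      have hvI : v ∉ I := by
        intro hv
        have : c = ∅ := by
          apply Finset.eq_empty_iff_forall_notMem.mpr
          intro x hx
          exact hI v hv x (hcsub x hx) (hcadj x hx)
        rw [this] at hcw
        simp at hcw
        exact absurd hcw (not_lt.mpr (hw v).le)
      have hnotmem : (Sum.inr cc : ExtOld G v ⊕ ExtNew G w v) ∉ Iold := by
        intro h
        obtain ⟨u, hu, -⟩ := (memIold _).mp h
        cases hu
      refine ⟨insert (Sum.inr cc) Iold, ?_, ?_⟩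
      · intro x hx y hy hadj
        rw [extStruction, SimpleGraph.fromRel_adj] at hadj
        obtain ⟨hne, hrel⟩ := hadj
        rw [Finset.mem_insert] at hx hy
        rcases hx with rfl | hx <;> rcases hy with rfl | hy
        · exact hne rfl
        · obtain ⟨u, rfl, hu⟩ := (memIold _).mp hy
          rcases hrel with h | h <;>
            · obtain ⟨z, hz, hadj'⟩ := h
              exact hI _ hu _ (hcsub z hz) hadj'
        · obtain ⟨u, rfl, hu⟩ := (memIold _).mp hx
          rcases hrel with h | h <;>
            · obtain ⟨z, hz, hadj'⟩ := h
              exact hI _ hu _ (hcsub z hz) hadj'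
        · obtain ⟨u, rfl, hu⟩ := (memIold _).mp hx
          obtain ⟨u', rfl, hu'⟩ := (memIold _).mp hy
          rcases hrel with h | h
          · exact hI _ hu _ hu' h
          · exact hI _ hu' _ hu h
      · rw [Finset.sum_insert hnotmem, sumIold]
        have hfilter : I.filter (fun y => ¬ P y) = c := by
          apply Finset.ext
          intro x
          simp only [Finset.mem_filter, hP, hc, not_and, not_not]
          constructor
          · rintro ⟨hx, hnp⟩
            refine ⟨hx, ?_⟩
            by_cases hxv : x = v
            · exact absurd (hxv ▸ hx) hvI
            · exact hnp hxv
          · rintro ⟨hx, hadj⟩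
            exact ⟨hx, fun _ => hadj⟩
        have : extWeight G w v (Sum.inr cc) = (∑ x ∈ c, w x) - w v := rfl
        rw [this, hsplit, hfilter]
        linarith
    · -- no new vertex needed
      refine ⟨Iold, hIoldIndep, ?_⟩
      rw [sumIold, hsplit]
      have hbound : ∑ x ∈ I.filter (fun y => ¬ P y), w x ≤ w v := by
        by_cases hvI : v ∈ I
        · have hcempty : c = ∅ := by
            apply Finset.eq_empty_iff_forall_notMem.mpr
            intro x hx
            exact hI v hvI x (hcsub x hx) (hcadj x hx)
          have hfilter : I.filter (fun y => ¬ P y) = {v} := by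
            apply Finset.ext
            intro x
            simp only [Finset.mem_filter, hP, not_and, not_not, Finset.mem_singleton]
            constructor
            · rintro ⟨hx, hnp⟩
              by_contra hxv
              have hadj : G.Adj v x := hnp hxv
              have : x ∈ c := Finset.mem_filter.mpr ⟨hx, hadj⟩
              rw [hcempty] at this
              exact absurd this (Finset.notMem_empty x)
            · rintro rfl
              exact ⟨hvI, fun h => absurd rfl h⟩
          rw [hfilter, Finset.sum_singleton]
        · have hfilter : I.filter (fun y => ¬ P y) = c := by
            apply Finset.ext
            intro x
            simp only [Finset.mem_filter, hP, hc, not_and, not_not]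
            constructor
            · rintro ⟨hx, hnp⟩
              refine ⟨hx, ?_⟩
              by_cases hxv : x = v
              · exact absurd (hxv ▸ hx) hvI
              · exact hnp hxv
            · rintro ⟨hx, hadj⟩
              exact ⟨hx, fun _ => hadj⟩
          rw [hfilter]
          exact not_lt.mp hcw
      linarith
  refine ⟨key, ?_⟩
  -- Part 2: the inequality on weighted independence numbers.
  set S : Set ℝ := {r : ℝ | ∃ I : Finset V, IsIndep G I ∧ r = ∑ x ∈ I, w x} with hS
  set S' : Set ℝ := {r : ℝ | ∃ I' : Finset (ExtOld G v ⊕ ExtNew G w v),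
      IsIndep (extStruction G w v) I' ∧ r = ∑ a ∈ I', extWeight G w v a} with hS'
  have hSne : S.Nonempty := ⟨0, ∅, fun x hx => absurd hx (Finset.notMem_empty x), by simp⟩
  have hS'bdd : BddAbove S' := by
    refine ⟨∑ a : ExtOld G v ⊕ ExtNew G w v, |extWeight G w v a|, ?_⟩
    rintro r ⟨I', -, rfl⟩
    calc ∑ a ∈ I', extWeight G w v a ≤ ∑ a ∈ I', |extWeight G w v a| :=
          Finset.sum_le_sum fun a _ => le_abs_self _
      _ ≤ ∑ a : ExtOld G v ⊕ ExtNew G w v, |extWeight G w v a| :=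
          Finset.sum_le_sum_of_subset_of_nonneg (Finset.subset_univ _)
            (fun a _ _ => abs_nonneg _)
  have hmain : alphaW G w ≤ alphaW (extStruction G w v) (extWeight G w v) + w v := by
    apply csSup_le hSne
    rintro r ⟨I, hI, rfl⟩
    obtain ⟨I', hI', hle⟩ := key I hI
    have hmem : (∑ a ∈ I', extWeight G w v a) ∈ S' := ⟨I', hI', rfl⟩
    have := le_csSup hS'bdd hmem
    have halpha : (∑ a ∈ I', extWeight G w v a)
        ≤ alphaW (extStruction G w v) (extWeight G w v) := this
    linarith
  linarith
end

section
/- Let G be a vertex-weighted graph with positive weights, let v be a vertex of G, and let G' be obtained from G by the extended weighted struction at v. If I' is an independent set of G' containing a new vertex v_c (with c ∈ C), then v_c is the unique new vertex in I', and (I' \ {v_c}) ∪ c is an independent set of G whose weight in G equals the weight of I' in G' plus w(v). -/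
/-!
Extended weighted struction: applied at an arbitrary vertex `v`.  It removes
`v` together with its whole neighborhood `N(v)`, and adds, for every
independent set `c` of `G[N(v)]` with `w(c) > w(v)`, a new vertex `v_c` of
weight `w(c) - w(v)`; `v_c` is adjacent to every remaining vertex adjacent
in `G` to some vertex of `c`, and the new vertices form a clique.
-/

open scoped Classical

variable {V : Type*}

/-- if `I'` is an independent set of the extended struction
graph `G'` containing a new vertex `v_c`, then `v_c` is the unique new
vertex of `I'`, and `(I' \ {v_c}) ∪ c` is an independent set of `G` whose
weight in `G` equals the weight of `I'` in `G'` plus `w v`. -/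
theorem extended_struction_replace_new_vertex [Fintype V]
    (G : SimpleGraph V) (w : V → ℝ) (hw : ∀ u, 0 < w u) (v : V)
    (I' : Finset (ExtOld G v ⊕ ExtNew G w v)) (hI' : IsIndep (extStruction G w v) I')
    (c : ExtNew G w v) (hc : Sum.inr c ∈ I') :
    (∀ d : ExtNew G w v, Sum.inr d ∈ I' → d = c) ∧
      IsIndep G (c.val ∪ extOldBack G w v I') ∧
      ∑ x ∈ c.val ∪ extOldBack G w v I', w x =
        (∑ a ∈ I', extWeight G w v a) + w v := by
  have huniq : ∀ d : ExtNew G w v, Sum.inr d ∈ I' → d = c := by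
    intro d hd
    by_contra hne
    refine hI' _ hd _ hc ?_
    rw [extStruction, SimpleGraph.fromRel_adj]
    exact ⟨by simpa using hne, Or.inl trivial⟩
  have hmemOld : ∀ y, y ∈ extOldBack G w v I' ↔
      ∃ h : y ≠ v ∧ ¬ G.Adj v y, Sum.inl (⟨y, h⟩ : ExtOld G v) ∈ I' := by
    intro y
    simp [extOldBack]
  have hdisj : Disjoint c.val (extOldBack G w v I') := by
    rw [Finset.disjoint_left]
    intro x hx hx'
    obtain ⟨h, -⟩ := (hmemOld x).1 hx'
    exact h.2 (c.2.1 x hx)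
  have hmixed : ∀ y (h : y ≠ v ∧ ¬ G.Adj v y),
      Sum.inl (⟨y, h⟩ : ExtOld G v) ∈ I' → ∀ x ∈ c.val, ¬ G.Adj y x := by
    intro y h hyI x hx hadj
    refine hI' _ hyI _ hc ?_
    rw [extStruction, SimpleGraph.fromRel_adj]
    exact ⟨by simp, Or.inl ⟨x, hx, hadj⟩⟩
  have hindep : IsIndep G (c.val ∪ extOldBack G w v I') := by
    intro x hx y hy hxy
    rw [Finset.mem_union] at hx hy
    rcases hx with hx | hx
    · rcases hy with hy | hy
      · exact c.2.2.1 x hx y hy hxy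
      · obtain ⟨h, hyI⟩ := (hmemOld y).1 hy
        exact hmixed y h hyI x hx hxy.symm
    · obtain ⟨h, hxI⟩ := (hmemOld x).1 hx
      rcases hy with hy | hy
      · exact hmixed x h hxI y hy hxy
      · obtain ⟨h', hyI⟩ := (hmemOld y).1 hy
        refine hI' _ hxI _ hyI ?_
        rw [extStruction, SimpleGraph.fromRel_adj]
        refine ⟨?_, Or.inl hxy⟩
        simp only [ne_eq, Sum.inl.injEq, Subtype.mk.injEq]
        exact hxy.ne
  refine ⟨huniq, hindep, ?_⟩
  have hsumold : ∑ a ∈ I'.erase (Sum.inr c), extWeight G w v a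
      = ∑ x ∈ extOldBack G w v I', w x := by
    refine (Finset.sum_nbij'
      (s := I'.erase (Sum.inr c)) (t := extOldBack G w v I')
      (f := extWeight G w v) (g := w)
      (i := fun a => Sum.elim (fun u => u.val) (fun _ => v) a)
      (j := fun y => if h : y ≠ v ∧ ¬ G.Adj v y then Sum.inl (⟨y, h⟩ : ExtOld G v)
        else Sum.inr c) ?_ ?_ ?_ ?_ ?_)
    · intro a ha
      rcases a with u | d
      · simp only [Sum.elim_inl]
        exact (hmemOld u.val).2 ⟨u.2, by simpa using (Finset.mem_erase.1 ha).2⟩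
      · exact absurd (huniq d (Finset.mem_erase.1 ha).2)
          (by simpa using (Finset.mem_erase.1 ha).1)
    · intro y hy
      obtain ⟨h, hyI⟩ := (hmemOld y).1 hy
      simp only [dif_pos h]
      exact Finset.mem_erase.2 ⟨by simp, hyI⟩
    · intro a ha
      rcases a with u | d
      · simp [u.2]
      · exact absurd (huniq d (Finset.mem_erase.1 ha).2)
          (by simpa using (Finset.mem_erase.1 ha).1)
    · intro y hy
      obtain ⟨h, -⟩ := (hmemOld y).1 hy
      simp only [dif_pos h, Sum.elim_inl]
    · intro a ha
      rcases a with u | d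
      · rfl
      · exact absurd (huniq d (Finset.mem_erase.1 ha).2)
          (by simpa using (Finset.mem_erase.1 ha).1)
  have hsplit : ∑ a ∈ I', extWeight G w v a
      = extWeight G w v (Sum.inr c) + ∑ a ∈ I'.erase (Sum.inr c), extWeight G w v a :=
    (Finset.add_sum_erase _ _ hc).symm
  rw [Finset.sum_union hdisj, hsplit, hsumold]
  simp only [extWeight]
  ring
end

section
/- Let G be a vertex-weighted graph with positive weights, let v be a vertex of G, and let G' be obtained from G by the extended weighted struction at v. If I' is an independent set of G' containing no new vertex, then I' ∪ {v} is an independent set of G whose weight in G equals the weight of I' in G' plus w(v). -/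
/-!
Extended weighted struction: applied at an arbitrary vertex `v`.  It removes
`v` together with its whole neighborhood `N(v)`, and adds, for every
independent set `c` of `G[N(v)]` with `w(c) > w(v)`, a new vertex `v_c` of
weight `w(c) - w(v)`; `v_c` is adjacent to every remaining vertex adjacent
in `G` to some vertex of `c`, and the new vertices form a clique.
-/

open scoped Classical

variable {V : Type*}

/-- if `I'` is an independent set of the extended struction
graph `G'` containing no new vertex, then `I' ∪ {v}` is an independent set
of `G` whose weight in `G` equals the weight of `I'` in `G'` plus `w v`. -/
theorem extended_struction_add_center [Fintype V]
    (G : SimpleGraph V) (w : V → ℝ) (hw : ∀ u, 0 < w u) (v : V)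
    (I' : Finset (ExtOld G v ⊕ ExtNew G w v)) (hI' : IsIndep (extStruction G w v) I')
    (hnone : ∀ c : ExtNew G w v, Sum.inr c ∉ I') :
    IsIndep G (insert v (extOldBack G w v I')) ∧
      ∑ x ∈ insert v (extOldBack G w v I'), w x =
        (∑ a ∈ I', extWeight G w v a) + w v := by
  classical
  have hmem : ∀ y, y ∈ extOldBack G w v I' ↔
      ∃ h : y ≠ v ∧ ¬ G.Adj v y, Sum.inl (⟨y, h⟩ : ExtOld G v) ∈ I' := by
    intro y
    simp [extOldBack]
  have hvnot : v ∉ extOldBack G w v I' := by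
    intro hv
    obtain ⟨h, _⟩ := (hmem v).1 hv
    exact h.1 rfl
  constructor
  · intro x hx y hy hadj
    rcases Finset.mem_insert.1 hx with rfl | hx
    · rcases Finset.mem_insert.1 hy with rfl | hy
      · exact G.irrefl hadj
      · obtain ⟨h, _⟩ := (hmem y).1 hy
        exact h.2 hadj
    · rcases Finset.mem_insert.1 hy with rfl | hy
      · obtain ⟨h, _⟩ := (hmem x).1 hx
        exact h.2 (G.adj_symm hadj)
      · obtain ⟨h1, hm1⟩ := (hmem x).1 hx
        obtain ⟨h2, hm2⟩ := (hmem y).1 hy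
        apply hI' _ hm1 _ hm2
        refine ⟨by simp [G.ne_of_adj hadj], Or.inl ?_⟩
        exact hadj
  · have key : ∑ a ∈ I', extWeight G w v a = ∑ x ∈ extOldBack G w v I', w x := by
      refine Finset.sum_bij
        (fun a _ => match a with | Sum.inl u => u.val | Sum.inr _ => v) ?_ ?_ ?_ ?_
      · rintro (u | c) ha
        · exact (hmem u.val).2 ⟨u.property, ha⟩
        · exact absurd ha (hnone c)
      · rintro (u | c) ha (u' | c') ha' h
        · simpa [Subtype.ext_iff] using h
        · exact absurd ha' (hnone c')
        · exact absurd ha (hnone c)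
        · exact absurd ha (hnone c)
      · intro y hy
        obtain ⟨h, hm⟩ := (hmem y).1 hy
        exact ⟨Sum.inl ⟨y, h⟩, hm, rfl⟩
      · rintro (u | c) ha
        · rfl
        · exact absurd ha (hnone c)
    rw [Finset.sum_insert hvnot, key]
    ring
end

section
/- Let G be a vertex-weighted graph with positive weights, let v be a vertex of G, and let G' be obtained from G by the extended weighted struction at v. If I' is a maximum weight independent set of G', define I = (I' \ {v_c}) ∪ c if I' contains a (necessarily unique) new vertex v_c, and I = I' ∪ {v} if I' contains no new vertex. Then I is a maximum weight independent set of G, and w(I) = α_w(G') + w(v). -/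
/-!
Extended weighted struction: applied at an arbitrary vertex `v`.  It removes
`v` together with its whole neighborhood `N(v)`, and adds, for every
independent set `c` of `G[N(v)]` with `w(c) > w(v)`, a new vertex `v_c` of
weight `w(c) - w(v)`; `v_c` is adjacent to every remaining vertex adjacent
in `G` to some vertex of `c`, and the new vertices form a clique.
-/

open scoped Classical

variable {V : Type*}

/-- `I` is a maximum weight independent set of `G` with weights `w`. -/
def IsMaxIndep (G : SimpleGraph V) (w : V → ℝ) (I : Finset V) : Prop :=
  IsIndep G I ∧ ∀ J : Finset V, IsIndep G J → ∑ x ∈ J, w x ≤ ∑ x ∈ I, w x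


-- Auxiliary lemmas -------------------------------------------------------

lemma extAdj_inl_inl {G : SimpleGraph V} {w : V → ℝ} {v : V} {u u' : ExtOld G v} :
    (extStruction G w v).Adj (Sum.inl u) (Sum.inl u') ↔ G.Adj u.val u'.val := by
  rw [extStruction, SimpleGraph.fromRel_adj]
  constructor
  · rintro ⟨hne, h | h⟩
    · exact h
    · exact h.symm
  · intro h
    refine ⟨?_, Or.inl h⟩
    intro he
    apply G.irrefl (v := u.val)
    have : u = u' := by simpa using he
    rw [this] at h ⊢; exact h

lemma extAdj_inl_inr {G : SimpleGraph V} {w : V → ℝ} {v : V} {u : ExtOld G v}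
    {c : ExtNew G w v} :
    (extStruction G w v).Adj (Sum.inl u) (Sum.inr c) ↔ ∃ x ∈ c.val, G.Adj u.val x := by
  rw [extStruction, SimpleGraph.fromRel_adj]
  constructor
  · rintro ⟨_, h | h⟩ <;> exact h
  · intro h; exact ⟨by simp, Or.inl h⟩

lemma extAdj_inr_inr {G : SimpleGraph V} {w : V → ℝ} {v : V} {c c' : ExtNew G w v} :
    (extStruction G w v).Adj (Sum.inr c) (Sum.inr c') ↔ c ≠ c' := by
  rw [extStruction, SimpleGraph.fromRel_adj]
  constructor
  · rintro ⟨hne, _⟩ he; exact hne (by rw [he])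
  · intro h; exact ⟨by simpa using h, Or.inl trivial⟩

lemma alphaW_eq_of_max {G : SimpleGraph V} {w : V → ℝ} {I : Finset V}
    (h : IsMaxIndep G w I) : alphaW G w = ∑ x ∈ I, w x := by
  apply IsGreatest.csSup_eq
  constructor
  · exact ⟨I, h.1, rfl⟩
  · rintro r ⟨J, hJ, rfl⟩; exact h.2 J hJ

/-- if `I'` is a maximum weight independent set of the extended
struction graph `G'`, then the set `I` defined by `I = (I' \ {v_c}) ∪ c` if
`I'` contains a (necessarily unique) new vertex `v_c`, and `I = I' ∪ {v}` if
it contains no new vertex, is a maximum weight independent set of `G`, of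
weight `α_w(G') + w v`. -/
theorem extended_struction_reconstruct_max [Fintype V]
    (G : SimpleGraph V) (w : V → ℝ) (hw : ∀ u, 0 < w u) (v : V)
    (I' : Finset (ExtOld G v ⊕ ExtNew G w v))
    (hI' : IsMaxIndep (extStruction G w v) (extWeight G w v) I') :
    (∀ c : ExtNew G w v, Sum.inr c ∈ I' →
        IsMaxIndep G w (c.val ∪ extOldBack G w v I') ∧
          ∑ x ∈ c.val ∪ extOldBack G w v I', w x =
            alphaW (extStruction G w v) (extWeight G w v) + w v) ∧
      ((∀ c : ExtNew G w v, Sum.inr c ∉ I') →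
        IsMaxIndep G w (insert v (extOldBack G w v I')) ∧
          ∑ x ∈ insert v (extOldBack G w v I'), w x =
            alphaW (extStruction G w v) (extWeight G w v) + w v) := by
  classical
  set B := extOldBack G w v I' with hB
  have hBmem : ∀ y : V, y ∈ B ↔
      ∃ h : y ≠ v ∧ ¬ G.Adj v y, Sum.inl (⟨y, h⟩ : ExtOld G v) ∈ I' := by
    intro y; simp [hB, extOldBack]
  have hB_sum : ∑ y ∈ B, w y = ∑ u ∈ I'.toLeft, w u.val := by
    have himg : B = I'.toLeft.image Subtype.val := by
      ext y
      simp only [Finset.mem_image, Finset.mem_toLeft, hBmem]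
      constructor
      · rintro ⟨h, hm⟩; exact ⟨⟨y, h⟩, hm, rfl⟩
      · rintro ⟨⟨y', h'⟩, hm, rfl⟩; exact ⟨h', hm⟩
    rw [himg, Finset.sum_image]
    intro a _ b _ h; exact Subtype.ext h
  have hsplit : ∑ x ∈ I', extWeight G w v x =
      (∑ u ∈ I'.toLeft, w u.val) + ∑ c ∈ I'.toRight, ((∑ x ∈ c.val, w x) - w v) := by
    conv_lhs => rw [← Finset.toLeft_disjSum_toRight (u := I')]
    rw [Finset.sum_disjSum]
    rfl
  have hBind : IsIndep G B := by
    intro y hy y' hy' hadj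
    obtain ⟨h1, hm1⟩ := (hBmem y).mp hy
    obtain ⟨h2, hm2⟩ := (hBmem y').mp hy'
    exact hI'.1 _ hm1 _ hm2 (extAdj_inl_inl.mpr hadj)
  have hmax : ∀ J : Finset V, IsIndep G J →
      ∑ x ∈ J, w x ≤ (∑ x ∈ I', extWeight G w v x) + w v := by
    intro J hJ
    set p : V → Prop := fun y => y ≠ v ∧ ¬ G.Adj v y with hp
    set Jo : Finset (ExtOld G v) := J.subtype p with hJo
    have hJo_sum : ∑ u ∈ Jo, w u.val = ∑ y ∈ J.filter p, w y := by
      rw [hJo]; exact Finset.sum_subtype_eq_sum_filter w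
    set Jn : Finset V := J.filter (fun y => G.Adj v y) with hJn
    have hJnJ : Jn ⊆ J := Finset.filter_subset _ _
    by_cases hcc : w v < ∑ x ∈ Jn, w x
    · have hvJ : v ∉ J := by
        intro hv
        have hJn0 : Jn = ∅ := by
          ext y
          simp only [hJn, Finset.mem_filter, Finset.notMem_empty, iff_false, not_and]
          intro hyJ hadj
          exact hJ v hv y hyJ hadj
        rw [hJn0] at hcc
        simp only [Finset.sum_empty] at hcc
        exact absurd hcc (not_lt.mpr (hw v).le)
      set c₀ : ExtNew G w v := ⟨Jn, fun x hx => (Finset.mem_filter.mp hx).2,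
        fun x hx y hy => hJ x (hJnJ hx) y (hJnJ hy), hcc⟩ with hc₀
      set J' : Finset (ExtOld G v ⊕ ExtNew G w v) := Jo.disjSum {c₀} with hJ'
      have hJ'ind : IsIndep (extStruction G w v) J' := by
        rintro (u | c1) ha (u' | c2) hb hadj
        · rw [hJ', Finset.inl_mem_disjSum] at ha hb
          exact hJ u.val (Finset.mem_subtype.mp ha) u'.val (Finset.mem_subtype.mp hb)
            (extAdj_inl_inl.mp hadj)
        · rw [hJ', Finset.inl_mem_disjSum] at ha
          rw [hJ', Finset.inr_mem_disjSum, Finset.mem_singleton] at hb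
          obtain ⟨x, hx, hux⟩ := extAdj_inl_inr.mp hadj
          subst hb
          exact hJ u.val (Finset.mem_subtype.mp ha) x (hJnJ hx) hux
        · rw [hJ', Finset.inr_mem_disjSum, Finset.mem_singleton] at ha
          rw [hJ', Finset.inl_mem_disjSum] at hb
          obtain ⟨x, hx, hux⟩ := extAdj_inl_inr.mp hadj.symm
          subst ha
          exact hJ u'.val (Finset.mem_subtype.mp hb) x (hJnJ hx) hux
        · rw [hJ', Finset.inr_mem_disjSum, Finset.mem_singleton] at ha hb
          subst ha; subst hb
          exact (extAdj_inr_inr.mp hadj) rfl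
      have hle := hI'.2 J' hJ'ind
      have hJ'sum : ∑ x ∈ J', extWeight G w v x
          = (∑ y ∈ J.filter p, w y) + ((∑ x ∈ Jn, w x) - w v) := by
        rw [hJ', Finset.sum_disjSum, Finset.sum_singleton]
        simp only [extWeight]
        rw [hJo_sum]
      have hJsum : ∑ x ∈ J, w x = (∑ y ∈ J.filter p, w y) + ∑ x ∈ Jn, w x := by
        rw [← Finset.sum_filter_add_sum_filter_not J (fun y => G.Adj v y) w]
        have hfe : J.filter (fun y => ¬ G.Adj v y) = J.filter p := by
          ext y
          simp only [Finset.mem_filter, hp]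
          constructor
          · rintro ⟨hyJ, hna⟩
            exact ⟨hyJ, fun he => hvJ (he ▸ hyJ), hna⟩
          · rintro ⟨hyJ, _, hna⟩; exact ⟨hyJ, hna⟩
        rw [hfe, ← hJn]
        ring
      linarith
    · set J' : Finset (ExtOld G v ⊕ ExtNew G w v) := Jo.disjSum ∅ with hJ'
      have hJ'ind : IsIndep (extStruction G w v) J' := by
        rintro (u | c1) ha (u' | c2) hb hadj
        · rw [hJ', Finset.inl_mem_disjSum] at ha hb
          exact hJ u.val (Finset.mem_subtype.mp ha) u'.val (Finset.mem_subtype.mp hb)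
            (extAdj_inl_inl.mp hadj)
        · rw [hJ', Finset.inr_mem_disjSum] at hb
          exact absurd hb (Finset.notMem_empty _)
        · rw [hJ', Finset.inr_mem_disjSum] at ha
          exact absurd ha (Finset.notMem_empty _)
        · rw [hJ', Finset.inr_mem_disjSum] at ha
          exact absurd ha (Finset.notMem_empty _)
      have hle := hI'.2 J' hJ'ind
      have hJ'sum : ∑ x ∈ J', extWeight G w v x = ∑ y ∈ J.filter p, w y := by
        rw [hJ', Finset.sum_disjSum, Finset.sum_empty]
        simp only [extWeight]
        rw [hJo_sum]
        ring
      by_cases hv : v ∈ J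
      · have herase : J.filter p = J.erase v := by
          ext y
          simp only [Finset.mem_filter, Finset.mem_erase, hp]
          constructor
          · rintro ⟨hyJ, hne, _⟩; exact ⟨hne, hyJ⟩
          · rintro ⟨hne, hyJ⟩
            exact ⟨hyJ, hne, fun hadj => hJ v hv y hyJ hadj⟩
        have hsplitv : ∑ x ∈ J, w x = w v + ∑ y ∈ J.erase v, w y :=
          (Finset.add_sum_erase J w hv).symm
        rw [hsplitv, ← herase]
        linarith
      · have hJsum : ∑ x ∈ J, w x = (∑ y ∈ J.filter p, w y) + ∑ x ∈ Jn, w x := by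
          rw [← Finset.sum_filter_add_sum_filter_not J (fun y => G.Adj v y) w]
          have hfe : J.filter (fun y => ¬ G.Adj v y) = J.filter p := by
            ext y
            simp only [Finset.mem_filter, hp]
            constructor
            · rintro ⟨hyJ, hna⟩
              exact ⟨hyJ, fun he => hv (he ▸ hyJ), hna⟩
            · rintro ⟨hyJ, _, hna⟩; exact ⟨hyJ, hna⟩
          rw [hfe, ← hJn]
          ring
        push_neg at hcc
        linarith
  constructor
  · intro c hc
    have hright : I'.toRight = {c} := by
      ext c'
      simp only [Finset.mem_toRight, Finset.mem_singleton]
      constructor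
      · intro h
        by_contra hne
        exact hI'.1 _ h _ hc (extAdj_inr_inr.mpr hne)
      · rintro rfl; exact hc
    have hdisj : Disjoint c.val B := by
      rw [Finset.disjoint_left]
      intro x hx hxB
      obtain ⟨⟨_, hna⟩, _⟩ := (hBmem x).mp hxB
      exact hna (c.prop.1 x hx)
    have hsum : ∑ x ∈ c.val ∪ B, w x = (∑ x ∈ I', extWeight G w v x) + w v := by
      rw [Finset.sum_union hdisj, hsplit, hright, Finset.sum_singleton, hB_sum]
      ring
    have hind : IsIndep G (c.val ∪ B) := by
      intro x hx y hy hadj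
      rcases Finset.mem_union.mp hx with hx | hx <;>
        rcases Finset.mem_union.mp hy with hy | hy
      · exact c.prop.2.1 x hx y hy hadj
      · obtain ⟨h2, hm2⟩ := (hBmem y).mp hy
        exact hI'.1 _ hm2 _ hc (extAdj_inl_inr.mpr ⟨x, hx, hadj.symm⟩)
      · obtain ⟨h2, hm2⟩ := (hBmem x).mp hx
        exact hI'.1 _ hm2 _ hc (extAdj_inl_inr.mpr ⟨y, hy, hadj⟩)
      · exact hBind x hx y hy hadj
    refine ⟨⟨hind, ?_⟩, ?_⟩
    · intro J hJ
      rw [hsum]; exact hmax J hJ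
    · rw [hsum, alphaW_eq_of_max hI']
  · intro hno
    have hright : I'.toRight = ∅ := by
      ext c
      simp only [Finset.mem_toRight, Finset.notMem_empty, iff_false]
      exact hno c
    have hvB : v ∉ B := by
      intro hv
      obtain ⟨⟨hne, _⟩, _⟩ := (hBmem v).mp hv
      exact hne rfl
    have hsum : ∑ x ∈ insert v B, w x = (∑ x ∈ I', extWeight G w v x) + w v := by
      rw [Finset.sum_insert hvB, hsplit, hright, Finset.sum_empty, hB_sum]
      ring
    have hind : IsIndep G (insert v B) := by
      intro x hx y hy hadj
      rcases Finset.mem_insert.mp hx with rfl | hx <;>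
        rcases Finset.mem_insert.mp hy with rfl | hy
      · exact G.irrefl hadj
      · obtain ⟨⟨_, hna⟩, _⟩ := (hBmem y).mp hy
        exact hna hadj
      · obtain ⟨⟨_, hna⟩, _⟩ := (hBmem x).mp hx
        exact hna hadj.symm
      · exact hBind x hx y hy hadj
    refine ⟨⟨hind, ?_⟩, ?_⟩
    · intro J hJ
      rw [hsum]; exact hmax J hJ
    · rw [hsum, alphaW_eq_of_max hI']
end

section
/- Let G be a vertex-weighted graph with positive weights, let v be an arbitrary vertex of G, and let G' be the vertex-weighted graph obtained from G by the extended reduced weighted struction applied at v. Then α_w(G) = α_w(G') + w(v). -/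
/-!
Extended reduced weighted struction: applied at an arbitrary vertex `v`.
It removes `v` together with its whole neighborhood `N(v)`.  For every
independent set `c` of `G[N(v)]` with `w(c) > w(v)` all of whose proper
subsets have weight at most `w(v)` (the family `C'`), it adds a new vertex
`v_c` of weight `w(c) - w(v)` (the set `V_C`), and for every such `c` and
every `y ∈ N(v)` with `y ∉ c` that is adjacent to no vertex of `c` it adds
a new vertex `v_{c,y}` of weight `w(y)` (the set `V_E`), with the edges
described below.
-/

open scoped Classical

variable {V : Type*}

/-- Membership in the family `C'`: `c` is an independent set of `G[N(v)]`
with `w(c) > w(v)` all of whose proper subsets have weight at most `w(v)`. -/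
def CPred (G : SimpleGraph V) (w : V → ℝ) (v : V) (c : Finset V) : Prop :=
  (∀ x ∈ c, G.Adj v x) ∧ IsIndep G c ∧ w v < ∑ x ∈ c, w x ∧
    ∀ d : Finset V, d ⊂ c → ∑ x ∈ d, w x ≤ w v

/-- Old vertices: the vertices outside the closed neighborhood `N[v]`. -/
abbrev ROld (G : SimpleGraph V) (v : V) : Type _ :=
  {u : V // u ≠ v ∧ ¬ G.Adj v u}

/-- The new vertices `V_C`, one for each `c ∈ C'`. -/
abbrev RVC (G : SimpleGraph V) (w : V → ℝ) (v : V) : Type _ :=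
  {c : Finset V // CPred G w v c}

/-- The new vertices `V_E`, one for each pair of `c ∈ C'` and `y ∈ N(v)`
with `y ∉ c` adjacent to no vertex of `c`. -/
abbrev RVE (G : SimpleGraph V) (w : V → ℝ) (v : V) : Type _ :=
  {p : Finset V × V //
    CPred G w v p.1 ∧ G.Adj v p.2 ∧ p.2 ∉ p.1 ∧ ∀ x ∈ p.1, ¬ G.Adj p.2 x}

/-- Adjacency for the extended reduced weighted struction at `v`. -/
def redRel (G : SimpleGraph V) (w : V → ℝ) (v : V) :
    ROld G v ⊕ RVC G w v ⊕ RVE G w v →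
      ROld G v ⊕ RVC G w v ⊕ RVE G w v → Prop
  | Sum.inl u, Sum.inl u' => G.Adj u.val u'.val
  | Sum.inl u, Sum.inr (Sum.inl c) => ∃ x ∈ c.val, G.Adj u.val x
  | Sum.inl u, Sum.inr (Sum.inr p) =>
      G.Adj u.val p.val.2 ∨ ∃ x ∈ p.val.1, G.Adj u.val x
  | Sum.inr (Sum.inl c), Sum.inl u => ∃ x ∈ c.val, G.Adj u.val x
  | Sum.inr (Sum.inl _), Sum.inr (Sum.inl _) => True
  | Sum.inr (Sum.inl c), Sum.inr (Sum.inr p) => c.val ≠ p.val.1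
  | Sum.inr (Sum.inr p), Sum.inl u =>
      G.Adj u.val p.val.2 ∨ ∃ x ∈ p.val.1, G.Adj u.val x
  | Sum.inr (Sum.inr p), Sum.inr (Sum.inl c) => c.val ≠ p.val.1
  | Sum.inr (Sum.inr p), Sum.inr (Sum.inr q) =>
      p.val.1 ≠ q.val.1 ∨ G.Adj p.val.2 q.val.2

/-- The graph obtained from `G` by the extended reduced weighted struction. -/
def redStruction (G : SimpleGraph V) (w : V → ℝ) (v : V) :
    SimpleGraph (ROld G v ⊕ RVC G w v ⊕ RVE G w v) :=
  SimpleGraph.fromRel (redRel G w v)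

/-- Weights after the extended reduced struction: old vertices keep their
weight, `v_c ∈ V_C` has weight `w(c) - w(v)`, and `v_{c,y} ∈ V_E` has
weight `w y`. -/
noncomputable def redWeight (G : SimpleGraph V) (w : V → ℝ) (v : V) :
    ROld G v ⊕ RVC G w v ⊕ RVE G w v → ℝ
  | Sum.inl u => w u.val
  | Sum.inr (Sum.inl c) => (∑ x ∈ c.val, w x) - w v
  | Sum.inr (Sum.inr p) => w p.val.2

/-- The old vertices of a set `I'` of struction vertices, seen back in `V`. -/
noncomputable def redOldBack (G : SimpleGraph V) (w : V → ℝ) (v : V) [Fintype V]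
    (I' : Finset (ROld G v ⊕ RVC G w v ⊕ RVE G w v)) : Finset V :=
  Finset.univ.filter fun y =>
    ∃ h : y ≠ v ∧ ¬ G.Adj v y, Sum.inl (⟨y, h⟩ : ROld G v) ∈ I'


/-! ### Auxiliary lemmas -/

lemma alphaW_set_fin (G : SimpleGraph V) [Fintype V] (w : V → ℝ) :
    {r : ℝ | ∃ I : Finset V, IsIndep G I ∧ r = ∑ x ∈ I, w x}.Finite := by
  have : {r : ℝ | ∃ I : Finset V, IsIndep G I ∧ r = ∑ x ∈ I, w x}
      ⊆ (fun I : Finset V => ∑ x ∈ I, w x) '' Set.univ := by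
    rintro r ⟨I, _, rfl⟩; exact ⟨I, trivial, rfl⟩
  exact (Set.finite_univ.image _).subset this

lemma indep_sum_le_alphaW [Fintype V] (G : SimpleGraph V) (w : V → ℝ)
    {I : Finset V} (hI : IsIndep G I) : ∑ x ∈ I, w x ≤ alphaW G w :=
  le_csSup (alphaW_set_fin G w).bddAbove ⟨I, hI, rfl⟩

lemma exists_indep_alphaW [Fintype V] (G : SimpleGraph V) (w : V → ℝ) :
    ∃ I : Finset V, IsIndep G I ∧ alphaW G w = ∑ x ∈ I, w x := by
  have hne : {r : ℝ | ∃ I : Finset V, IsIndep G I ∧ r = ∑ x ∈ I, w x}.Nonempty :=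
    ⟨0, ∅, by simp [IsIndep]⟩
  exact hne.csSup_mem (alphaW_set_fin G w)

section Helpers
variable (G : SimpleGraph V) (w : V → ℝ) (v : V)

noncomputable def oldPart (S : Finset V)
    (hS : ∀ y ∈ S, y ≠ v ∧ ¬ G.Adj v y) :
    Finset (ROld G v ⊕ RVC G w v ⊕ RVE G w v) :=
  S.attach.image fun y => Sum.inl ⟨y.1, hS y.1 y.2⟩

lemma mem_oldPart {S : Finset V} {hS : ∀ y ∈ S, y ≠ v ∧ ¬ G.Adj v y}
    {x : ROld G v ⊕ RVC G w v ⊕ RVE G w v} :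
    x ∈ oldPart G w v S hS ↔ ∃ u : ROld G v, u.val ∈ S ∧ x = Sum.inl u := by
  constructor
  · intro hx
    rcases Finset.mem_image.1 hx with ⟨y, hy, rfl⟩
    exact ⟨_, y.2, rfl⟩
  · rintro ⟨u, hu, rfl⟩
    exact Finset.mem_image.2 ⟨⟨u.val, hu⟩, Finset.mem_attach _ _, rfl⟩

lemma sum_oldPart {S : Finset V} {hS : ∀ y ∈ S, y ≠ v ∧ ¬ G.Adj v y} :
    ∑ z ∈ oldPart G w v S hS, redWeight G w v z = ∑ x ∈ S, w x := by
  rw [oldPart, Finset.sum_image, ← Finset.sum_attach S (fun x => w x)]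
  · rfl
  · intro a _ b _ h
    simp only [Sum.inl.injEq, Subtype.mk.injEq] at h
    exact Subtype.ext h

noncomputable def vePart (c : Finset V) (T : Finset V)
    (hT : ∀ y ∈ T, CPred G w v c ∧ G.Adj v y ∧ y ∉ c ∧ ∀ x ∈ c, ¬ G.Adj y x) :
    Finset (ROld G v ⊕ RVC G w v ⊕ RVE G w v) :=
  T.attach.image fun y => Sum.inr (Sum.inr ⟨(c, y.1), hT y.1 y.2⟩)

lemma mem_vePart {c T : Finset V}
    {hT : ∀ y ∈ T, CPred G w v c ∧ G.Adj v y ∧ y ∉ c ∧ ∀ x ∈ c, ¬ G.Adj y x}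
    {x : ROld G v ⊕ RVC G w v ⊕ RVE G w v} :
    x ∈ vePart G w v c T hT ↔
      ∃ p : RVE G w v, p.val.1 = c ∧ p.val.2 ∈ T ∧ x = Sum.inr (Sum.inr p) := by
  constructor
  · intro hx
    rcases Finset.mem_image.1 hx with ⟨y, hy, rfl⟩
    exact ⟨_, rfl, y.2, rfl⟩
  · rintro ⟨p, hp1, hp2, rfl⟩
    refine Finset.mem_image.2 ⟨⟨p.val.2, hp2⟩, Finset.mem_attach _ _, ?_⟩
    have hval : ((c, p.val.2) : Finset V × V) = p.val := by
      rw [← hp1]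
    exact congrArg (fun q => Sum.inr (Sum.inr q)) (Subtype.ext hval)

lemma sum_vePart {c T : Finset V}
    {hT : ∀ y ∈ T, CPred G w v c ∧ G.Adj v y ∧ y ∉ c ∧ ∀ x ∈ c, ¬ G.Adj y x} :
    ∑ z ∈ vePart G w v c T hT, redWeight G w v z = ∑ x ∈ T, w x := by
  rw [vePart, Finset.sum_image, ← Finset.sum_attach T (fun x => w x)]
  · rfl
  · intro a _ b _ h
    simp only [Sum.inr.injEq, Subtype.mk.injEq, Prod.mk.injEq] at h
    exact Subtype.ext h.2

end Helpers

lemma redAdj_iff (G : SimpleGraph V) (w : V → ℝ) (v : V)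
    {x y : ROld G v ⊕ RVC G w v ⊕ RVE G w v} :
    (redStruction G w v).Adj x y ↔ x ≠ y ∧ (redRel G w v x y ∨ redRel G w v y x) :=
  Iff.rfl

lemma dir1 [Fintype V] (G : SimpleGraph V) (w : V → ℝ) (hw : ∀ u, 0 < w u) (v : V)
    {I : Finset V} (hI : IsIndep G I) :
    ∃ I' : Finset (ROld G v ⊕ RVC G w v ⊕ RVE G w v),
      IsIndep (redStruction G w v) I' ∧
      ∑ x ∈ I, w x ≤ (∑ x ∈ I', redWeight G w v x) + w v := by
  classical
  by_cases hv : v ∈ I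
  · -- v ∈ I : neighborhood of v misses I
    have hS : ∀ y ∈ I.erase v, y ≠ v ∧ ¬ G.Adj v y := by
      intro y hy
      exact ⟨Finset.ne_of_mem_erase hy, hI v hv y (Finset.mem_of_mem_erase hy)⟩
    refine ⟨oldPart G w v (I.erase v) hS, ?_, ?_⟩
    · intro x hx y hy hadj
      rcases (mem_oldPart G w v).1 hx with ⟨u, hu, rfl⟩
      rcases (mem_oldPart G w v).1 hy with ⟨u', hu', rfl⟩
      rcases (redAdj_iff G w v).1 hadj with ⟨-, h | h⟩
      · exact hI u.val (Finset.mem_of_mem_erase hu) u'.val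
          (Finset.mem_of_mem_erase hu') h
      · exact hI u'.val (Finset.mem_of_mem_erase hu') u.val
          (Finset.mem_of_mem_erase hu) h
    · rw [sum_oldPart, Finset.sum_erase_add _ _ hv]
  · -- v ∉ I
    set c₀ : Finset V := I.filter (fun y => G.Adj v y) with hc₀def
    have hc₀I : c₀ ⊆ I := Finset.filter_subset _ _
    have hSold : ∀ y ∈ I \ c₀, y ≠ v ∧ ¬ G.Adj v y := by
      intro y hy
      rcases Finset.mem_sdiff.1 hy with ⟨hyI, hyc⟩
      refine ⟨fun h => hv (h ▸ hyI), fun h => hyc ?_⟩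
      exact Finset.mem_filter.2 ⟨hyI, h⟩
    have hsum_split : ∑ x ∈ I \ c₀, w x + ∑ x ∈ c₀, w x = ∑ x ∈ I, w x :=
      Finset.sum_sdiff hc₀I
    by_cases hbig : w v < ∑ x ∈ c₀, w x
    · -- interesting case : choose minimal c ⊆ c₀ with w c > w v
      have hSne : (c₀.powerset.filter fun d => w v < ∑ x ∈ d, w x).Nonempty :=
        ⟨c₀, Finset.mem_filter.2 ⟨Finset.mem_powerset_self _, hbig⟩⟩
      obtain ⟨c, hcmem, hcmin⟩ := Finset.exists_min_image _ Finset.card hSne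
      rcases Finset.mem_filter.1 hcmem with ⟨hcpow, hcw⟩
      have hcc₀ : c ⊆ c₀ := Finset.mem_powerset.1 hcpow
      have hcI : c ⊆ I := hcc₀.trans hc₀I
      have hcp : CPred G w v c := by
        refine ⟨fun x hx => (Finset.mem_filter.1 (hcc₀ hx)).2, ?_, hcw, ?_⟩
        · intro x hx y hy
          exact hI x (hcI hx) y (hcI hy)
        · intro d hd
          by_contra hwd
          push_neg at hwd
          have : c.card ≤ d.card :=
            hcmin d (Finset.mem_filter.2
              ⟨Finset.mem_powerset.2 (hd.subset.trans hcc₀), hwd⟩)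
          exact absurd (Finset.card_lt_card hd) (not_lt.2 this)
      have hT : ∀ y ∈ c₀ \ c,
          CPred G w v c ∧ G.Adj v y ∧ y ∉ c ∧ ∀ x ∈ c, ¬ G.Adj y x := by
        intro y hy
        rcases Finset.mem_sdiff.1 hy with ⟨hyc₀, hyc⟩
        refine ⟨hcp, (Finset.mem_filter.1 hyc₀).2, hyc, fun x hx => ?_⟩
        exact hI y (hc₀I hyc₀) x (hcI hx)
      refine ⟨oldPart G w v (I \ c₀) hSold ∪
          ({Sum.inr (Sum.inl ⟨c, hcp⟩)} ∪ vePart G w v c (c₀ \ c) hT), ?_, ?_⟩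
      · -- independence
        intro x hx y hy hadj
        rcases (redAdj_iff G w v).1 hadj with ⟨hne, hrel⟩
        have hmem : ∀ z ∈ oldPart G w v (I \ c₀) hSold ∪
            ({Sum.inr (Sum.inl ⟨c, hcp⟩)} ∪ vePart G w v c (c₀ \ c) hT),
            (∃ u : ROld G v, u.val ∈ I \ c₀ ∧ z = Sum.inl u) ∨
            z = Sum.inr (Sum.inl ⟨c, hcp⟩) ∨
            (∃ p : RVE G w v, p.val.1 = c ∧ p.val.2 ∈ c₀ \ c ∧
              z = Sum.inr (Sum.inr p)) := by
          intro z hz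
          rcases Finset.mem_union.1 hz with h | h
          · exact Or.inl ((mem_oldPart G w v).1 h)
          · rcases Finset.mem_union.1 h with h | h
            · exact Or.inr (Or.inl (Finset.mem_singleton.1 h))
            · exact Or.inr (Or.inr ((mem_vePart G w v).1 h))
        have key : ∀ a b : ROld G v ⊕ RVC G w v ⊕ RVE G w v,
            ((∃ u : ROld G v, u.val ∈ I \ c₀ ∧ a = Sum.inl u) ∨
             a = Sum.inr (Sum.inl ⟨c, hcp⟩) ∨
             (∃ p : RVE G w v, p.val.1 = c ∧ p.val.2 ∈ c₀ \ c ∧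
               a = Sum.inr (Sum.inr p))) →
            ((∃ u : ROld G v, u.val ∈ I \ c₀ ∧ b = Sum.inl u) ∨
             b = Sum.inr (Sum.inl ⟨c, hcp⟩) ∨
             (∃ p : RVE G w v, p.val.1 = c ∧ p.val.2 ∈ c₀ \ c ∧
               b = Sum.inr (Sum.inr p))) →
            a ≠ b → ¬ redRel G w v a b := by
          rintro a b (⟨u, hu, rfl⟩ | rfl | ⟨p, hp1, hp2, rfl⟩)
            (⟨u', hu', rfl⟩ | rfl | ⟨q, hq1, hq2, rfl⟩) hne hrel
          · exact hI u.val (Finset.mem_sdiff.1 hu).1 u'.val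
              (Finset.mem_sdiff.1 hu').1 hrel
          · rcases hrel with ⟨t, ht, hadj'⟩
            exact hI u.val (Finset.mem_sdiff.1 hu).1 t (hcI ht) hadj'
          · rcases hrel with hadj' | ⟨t, ht, hadj'⟩
            · exact hI u.val (Finset.mem_sdiff.1 hu).1 q.val.2
                (hc₀I (Finset.mem_sdiff.1 hq2).1) hadj'
            · exact hI u.val (Finset.mem_sdiff.1 hu).1 t (hcI (hq1 ▸ ht)) hadj'
          · rcases hrel with ⟨t, ht, hadj'⟩
            exact hI u'.val (Finset.mem_sdiff.1 hu').1 t (hcI ht) hadj'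
          · exact hne rfl
          · exact hrel hq1.symm
          · rcases hrel with hadj' | ⟨t, ht, hadj'⟩
            · exact hI u'.val (Finset.mem_sdiff.1 hu').1 p.val.2
                (hc₀I (Finset.mem_sdiff.1 hp2).1) hadj'
            · exact hI u'.val (Finset.mem_sdiff.1 hu').1 t
                (hcI (hp1 ▸ ht)) hadj'
          · exact hrel hp1.symm
          · rcases hrel with hne' | hadj'
            · exact hne' (hp1.trans hq1.symm)
            · exact hI p.val.2 (hc₀I (Finset.mem_sdiff.1 hp2).1) q.val.2
                (hc₀I (Finset.mem_sdiff.1 hq2).1) hadj'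
        rcases hrel with h | h
        · exact key x y (hmem x hx) (hmem y hy) hne h
        · exact key y x (hmem y hy) (hmem x hx) (Ne.symm hne) h
      · -- weight
        have hd1 : Disjoint (oldPart G w v (I \ c₀) hSold)
            ({Sum.inr (Sum.inl ⟨c, hcp⟩)} ∪ vePart G w v c (c₀ \ c) hT) := by
          rw [Finset.disjoint_left]
          intro z hz hz'
          rcases (mem_oldPart G w v).1 hz with ⟨u, -, rfl⟩
          rcases Finset.mem_union.1 hz' with h | h
          · simp at h
          · rcases (mem_vePart G w v).1 h with ⟨p, -, -, h⟩
            simp at h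
        have hd2 : Disjoint ({Sum.inr (Sum.inl ⟨c, hcp⟩)} :
            Finset (ROld G v ⊕ RVC G w v ⊕ RVE G w v))
            (vePart G w v c (c₀ \ c) hT) := by
          rw [Finset.disjoint_left]
          intro z hz hz'
          rcases (mem_vePart G w v).1 hz' with ⟨p, -, -, rfl⟩
          simp at hz
        rw [Finset.sum_union hd1, Finset.sum_union hd2, sum_oldPart, sum_vePart,
          Finset.sum_singleton]
        have hsplit2 : ∑ x ∈ c₀ \ c, w x + ∑ x ∈ c, w x = ∑ x ∈ c₀, w x :=
          Finset.sum_sdiff hcc₀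
        have : redWeight G w v (Sum.inr (Sum.inl ⟨c, hcp⟩)) =
            (∑ x ∈ c, w x) - w v := rfl
        rw [this]
        linarith
    · -- w c₀ ≤ w v : just drop c₀
      push_neg at hbig
      refine ⟨oldPart G w v (I \ c₀) hSold, ?_, ?_⟩
      · intro x hx y hy hadj
        rcases (mem_oldPart G w v).1 hx with ⟨u, hu, rfl⟩
        rcases (mem_oldPart G w v).1 hy with ⟨u', hu', rfl⟩
        rcases (redAdj_iff G w v).1 hadj with ⟨-, h | h⟩
        · exact hI u.val (Finset.mem_sdiff.1 hu).1 u'.val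
            (Finset.mem_sdiff.1 hu').1 h
        · exact hI u'.val (Finset.mem_sdiff.1 hu').1 u.val
            (Finset.mem_sdiff.1 hu).1 h
      · rw [sum_oldPart]
        linarith

lemma dir2_main [Fintype V] (G : SimpleGraph V) (w : V → ℝ) (hw : ∀ u, 0 < w u) (v : V)
    {I' : Finset (ROld G v ⊕ RVC G w v ⊕ RVE G w v)}
    (hI' : IsIndep (redStruction G w v) I')
    (cstar : Finset V) (hcp : CPred G w v cstar)
    (hVC_all : ∀ d ∈ I'.toRight.toLeft, d.val = cstar)
    (hVE_all : ∀ p ∈ I'.toRight.toRight, p.val.1 = cstar)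
    (hOldC : ∀ u ∈ I'.toLeft, ∀ x ∈ cstar, ¬ G.Adj u.val x) :
    ∃ I : Finset V, IsIndep G I ∧
      (∑ x ∈ I', redWeight G w v x) + w v ≤ ∑ x ∈ I, w x := by
  classical
  have noRel : ∀ z ∈ I', ∀ z' ∈ I', z ≠ z' → ¬ redRel G w v z z' :=
    fun z hz z' hz' hne h => hI' z hz z' hz' ⟨hne, Or.inl h⟩
  set Old : Finset V := I'.toLeft.image Subtype.val with hOlddef
  set Ys : Finset V := I'.toRight.toRight.image (fun p => p.val.2) with hYsdef
  -- sums
  have hsum : ∑ x ∈ I', redWeight G w v x =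
      (∑ u ∈ I'.toLeft, w u.val) +
      ((∑ d ∈ I'.toRight.toLeft, ((∑ x ∈ d.val, w x) - w v)) +
       (∑ p ∈ I'.toRight.toRight, w p.val.2)) := by
    conv_lhs => rw [← Finset.toLeft_disjSum_toRight (u := I')]
    rw [Finset.sum_disjSum]
    congr 1
    conv_lhs => rw [← Finset.toLeft_disjSum_toRight (u := I'.toRight)]
    rw [Finset.sum_disjSum]
    rfl
  have hOldSum : ∑ y ∈ Old, w y = ∑ u ∈ I'.toLeft, w u.val := by
    rw [hOlddef, Finset.sum_image]
    intro a _ b _ h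
    exact Subtype.ext h
  have hYsSum : ∑ y ∈ Ys, w y = ∑ p ∈ I'.toRight.toRight, w p.val.2 := by
    rw [hYsdef, Finset.sum_image]
    intro a ha b hb h
    refine Subtype.ext (Prod.ext ?_ h)
    rw [hVE_all a ha, hVE_all b hb]
  have hVCsum : ∑ d ∈ I'.toRight.toLeft, ((∑ x ∈ d.val, w x) - w v) ≤
      (∑ x ∈ cstar, w x) - w v := by
    have hsub : I'.toRight.toLeft ⊆ {(⟨cstar, hcp⟩ : RVC G w v)} := by
      intro d hd
      exact Finset.mem_singleton.2 (Subtype.ext (hVC_all d hd))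
    calc ∑ d ∈ I'.toRight.toLeft, ((∑ x ∈ d.val, w x) - w v)
        ≤ ∑ d ∈ ({(⟨cstar, hcp⟩ : RVC G w v)} : Finset (RVC G w v)),
            ((∑ x ∈ d.val, w x) - w v) := by
          refine Finset.sum_le_sum_of_subset_of_nonneg hsub ?_
          intro d hd _
          rcases Finset.mem_singleton.1 hd with rfl
          have := hcp.2.2.1
          linarith
      _ = (∑ x ∈ cstar, w x) - w v := Finset.sum_singleton _ _
  -- membership facts
  have hOldMem : ∀ y ∈ Old, ∃ u : ROld G v, u ∈ I'.toLeft ∧ u.val = y := by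
    intro y hy
    rcases Finset.mem_image.1 hy with ⟨u, hu, rfl⟩
    exact ⟨u, hu, rfl⟩
  have hYsMem : ∀ y ∈ Ys, ∃ p : RVE G w v, p ∈ I'.toRight.toRight ∧ p.val.2 = y := by
    intro y hy
    rcases Finset.mem_image.1 hy with ⟨p, hp, rfl⟩
    exact ⟨p, hp, rfl⟩
  -- disjointness
  have hYadjv : ∀ y ∈ Ys, G.Adj v y := by
    intro y hy
    rcases hYsMem y hy with ⟨p, hp, rfl⟩
    exact p.prop.2.1
  have hOldv : ∀ y ∈ Old, y ≠ v ∧ ¬ G.Adj v y := by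
    intro y hy
    rcases hOldMem y hy with ⟨u, hu, rfl⟩
    exact u.prop
  have hd1 : Disjoint cstar Ys := by
    rw [Finset.disjoint_left]
    intro a ha hay
    rcases hYsMem a hay with ⟨p, hp, hpa⟩
    exact p.prop.2.2.1 (by rw [hVE_all p hp, hpa]; exact ha)
  have hd2 : Disjoint (cstar ∪ Ys) Old := by
    rw [Finset.disjoint_left]
    intro a ha haO
    rcases Finset.mem_union.1 ha with h | h
    · exact (hOldv a haO).2 (hcp.1 a h)
    · exact (hOldv a haO).2 (hYadjv a h)
  refine ⟨cstar ∪ Ys ∪ Old, ?_, ?_⟩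
  · -- independence in G
    -- basic non-adjacency facts
    have fOldOld : ∀ u ∈ I'.toLeft, ∀ u' ∈ I'.toLeft, ¬ G.Adj u.val u'.val := by
      intro u hu u' hu' hadj
      by_cases h : u = u'
      · subst h; exact G.loopless.irrefl _ hadj
      · exact noRel (Sum.inl u) (Finset.mem_toLeft.1 hu) (Sum.inl u')
          (Finset.mem_toLeft.1 hu') (by simpa using h) hadj
    have fYsYs : ∀ p ∈ I'.toRight.toRight, ∀ q ∈ I'.toRight.toRight,
        ¬ G.Adj p.val.2 q.val.2 := by
      intro p hp q hq hadj
      by_cases h : p = q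
      · subst h; exact G.loopless.irrefl _ hadj
      · exact noRel (Sum.inr (Sum.inr p))
          (Finset.mem_toRight.1 (Finset.mem_toRight.1 hp))
          (Sum.inr (Sum.inr q))
          (Finset.mem_toRight.1 (Finset.mem_toRight.1 hq))
          (by simpa using h) (Or.inr hadj)
    have fCYs : ∀ x ∈ cstar, ∀ p ∈ I'.toRight.toRight, ¬ G.Adj p.val.2 x := by
      intro x hx p hp
      exact p.prop.2.2.2 x (by rw [hVE_all p hp]; exact hx)
    have fOldYs : ∀ u ∈ I'.toLeft, ∀ p ∈ I'.toRight.toRight,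
        ¬ G.Adj u.val p.val.2 := by
      intro u hu p hp hadj
      exact noRel (Sum.inl u) (Finset.mem_toLeft.1 hu) (Sum.inr (Sum.inr p))
        (Finset.mem_toRight.1 (Finset.mem_toRight.1 hp))
        (by simp) (Or.inl hadj)
    intro x hx y hy hadj
    have hchar : ∀ z ∈ cstar ∪ Ys ∪ Old, z ∈ cstar ∨ z ∈ Ys ∨ z ∈ Old := by
      intro z hz
      rcases Finset.mem_union.1 hz with h | h
      · rcases Finset.mem_union.1 h with h | h
        · exact Or.inl h
        · exact Or.inr (Or.inl h)
      · exact Or.inr (Or.inr h)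
    rcases hchar x hx with hxc | hxy | hxo <;> rcases hchar y hy with hyc | hyy | hyo
    · exact hcp.2.1 x hxc y hyc hadj
    · rcases hYsMem y hyy with ⟨p, hp, rfl⟩
      exact fCYs x hxc p hp hadj.symm
    · rcases hOldMem y hyo with ⟨u, hu, rfl⟩
      exact hOldC u hu x hxc hadj.symm
    · rcases hYsMem x hxy with ⟨p, hp, rfl⟩
      exact fCYs y hyc p hp hadj
    · rcases hYsMem x hxy with ⟨p, hp, rfl⟩
      rcases hYsMem y hyy with ⟨q, hq, rfl⟩
      exact fYsYs p hp q hq hadj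
    · rcases hYsMem x hxy with ⟨p, hp, rfl⟩
      rcases hOldMem y hyo with ⟨u, hu, rfl⟩
      exact fOldYs u hu p hp hadj.symm
    · rcases hOldMem x hxo with ⟨u, hu, rfl⟩
      exact hOldC u hu y hyc hadj
    · rcases hOldMem x hxo with ⟨u, hu, rfl⟩
      rcases hYsMem y hyy with ⟨p, hp, rfl⟩
      exact fOldYs u hu p hp hadj
    · rcases hOldMem x hxo with ⟨u, hu, rfl⟩
      rcases hOldMem y hyo with ⟨u', hu', rfl⟩
      exact fOldOld u hu u' hu' hadj
  · -- weights
    rw [Finset.sum_union hd2, Finset.sum_union hd1, hsum]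
    rw [hOldSum.symm] at *
    rw [hYsSum.symm]
    linarith [hVCsum]

lemma dir2 [Fintype V] (G : SimpleGraph V) (w : V → ℝ) (hw : ∀ u, 0 < w u) (v : V)
    {I' : Finset (ROld G v ⊕ RVC G w v ⊕ RVE G w v)}
    (hI' : IsIndep (redStruction G w v) I') :
    ∃ I : Finset V, IsIndep G I ∧
      (∑ x ∈ I', redWeight G w v x) + w v ≤ ∑ x ∈ I, w x := by
  classical
  have noRel : ∀ z ∈ I', ∀ z' ∈ I', z ≠ z' → ¬ redRel G w v z z' :=
    fun z hz z' hz' hne h => hI' z hz z' hz' ⟨hne, Or.inl h⟩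
  rcases eq_or_ne I'.toRight ∅ with hR | hR
  · -- no new vertices in I'
    set Old : Finset V := I'.toLeft.image Subtype.val with hOlddef
    have hsum : ∑ x ∈ I', redWeight G w v x = ∑ u ∈ I'.toLeft, w u.val := by
      conv_lhs => rw [← Finset.toLeft_disjSum_toRight (u := I')]
      rw [Finset.sum_disjSum, hR, Finset.sum_empty, add_zero]
      rfl
    have hOldSum : ∑ y ∈ Old, w y = ∑ u ∈ I'.toLeft, w u.val := by
      rw [hOlddef, Finset.sum_image]
      intro a _ b _ h
      exact Subtype.ext h
    have hOldMem : ∀ y ∈ Old, ∃ u : ROld G v, u ∈ I'.toLeft ∧ u.val = y := by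
      intro y hy
      rcases Finset.mem_image.1 hy with ⟨u, hu, rfl⟩
      exact ⟨u, hu, rfl⟩
    have hvO : v ∉ Old := by
      intro hv
      rcases hOldMem v hv with ⟨u, _, hu⟩
      exact u.prop.1 hu
    refine ⟨insert v Old, ?_, ?_⟩
    · intro x hx y hy hadj
      have fOldOld : ∀ u ∈ I'.toLeft, ∀ u' ∈ I'.toLeft, ¬ G.Adj u.val u'.val := by
        intro u hu u' hu' hadj'
        by_cases h : u = u'
        · subst h; exact G.loopless.irrefl _ hadj'
        · exact noRel (Sum.inl u) (Finset.mem_toLeft.1 hu) (Sum.inl u')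
            (Finset.mem_toLeft.1 hu') (by simpa using h) hadj'
      rcases Finset.mem_insert.1 hx with rfl | hxo <;>
        rcases Finset.mem_insert.1 hy with h | hyo
      · exact G.loopless.irrefl x (h ▸ hadj)
      · rcases hOldMem y hyo with ⟨u, hu, rfl⟩
        exact u.prop.2 hadj
      · rcases hOldMem x hxo with ⟨u, hu, rfl⟩
        exact u.prop.2 (h ▸ hadj).symm
      · rcases hOldMem x hxo with ⟨u, hu, rfl⟩
        rcases hOldMem y hyo with ⟨u', hu', rfl⟩
        exact fOldOld u hu u' hu' hadj
    · rw [Finset.sum_insert hvO, hsum, hOldSum]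
      linarith
  · -- some new vertex
    rcases Finset.nonempty_iff_ne_empty.2 hR with ⟨z₀, hz₀⟩
    have hz₀I : Sum.inr z₀ ∈ I' := Finset.mem_toRight.1 hz₀
    rcases z₀ with d₀ | p₀
    · -- a V_C vertex is present
      refine dir2_main G w hw v hI' d₀.val d₀.prop ?_ ?_ ?_
      · intro d hd
        by_contra hne
        have hne' : d ≠ d₀ := fun h => hne (h ▸ rfl)
        exact noRel (Sum.inr (Sum.inl d))
          (Finset.mem_toRight.1 (Finset.mem_toLeft.1 hd))
          (Sum.inr (Sum.inl d₀)) hz₀I (by simpa using hne') trivial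
      · intro p hp
        by_contra hne
        exact noRel (Sum.inr (Sum.inl d₀)) hz₀I (Sum.inr (Sum.inr p))
          (Finset.mem_toRight.1 (Finset.mem_toRight.1 hp))
          (by simp) (fun h => hne h.symm)
      · intro u hu x hx hadj
        exact noRel (Sum.inl u) (Finset.mem_toLeft.1 hu)
          (Sum.inr (Sum.inl d₀)) hz₀I (by simp) ⟨x, hx, hadj⟩
    · -- only V_E vertices among the new ones
      refine dir2_main G w hw v hI' p₀.val.1 p₀.prop.1 ?_ ?_ ?_
      · intro d hd
        by_contra hne
        exact noRel (Sum.inr (Sum.inl d))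
          (Finset.mem_toRight.1 (Finset.mem_toLeft.1 hd))
          (Sum.inr (Sum.inr p₀)) hz₀I (by simp) hne
      · intro p hp
        by_cases h : p = p₀
        · subst h; rfl
        · by_contra hne
          exact noRel (Sum.inr (Sum.inr p))
            (Finset.mem_toRight.1 (Finset.mem_toRight.1 hp))
            (Sum.inr (Sum.inr p₀)) hz₀I (by simpa using h) (Or.inl hne)
      · intro u hu x hx hadj
        exact noRel (Sum.inl u) (Finset.mem_toLeft.1 hu)
          (Sum.inr (Sum.inr p₀)) hz₀I (by simp)
          (Or.inr ⟨x, hx, hadj⟩)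

/-- the extended reduced weighted struction lowers the
weighted independence number by exactly `w v`. -/
theorem extended_reduced_weighted_struction [Fintype V]
    (G : SimpleGraph V) (w : V → ℝ) (hw : ∀ u, 0 < w u) (v : V) :
    alphaW G w = alphaW (redStruction G w v) (redWeight G w v) + w v := by
  classical
  apply le_antisymm
  · obtain ⟨I, hI, hEq⟩ := exists_indep_alphaW G w
    obtain ⟨I', hI', hle⟩ := dir1 G w hw v hI
    have h2 := indep_sum_le_alphaW (redStruction G w v) (redWeight G w v) hI'
    rw [hEq]
    linarith
  · obtain ⟨I', hI', hEq⟩ :=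
      exists_indep_alphaW (redStruction G w v) (redWeight G w v)
    obtain ⟨I, hI, hle⟩ := dir2 G w hw v hI'
    have h2 := indep_sum_le_alphaW G w hI
    rw [hEq]
    linarith
end

section
/- Let G be a vertex-weighted graph with positive weights, let v be a vertex of G, and let G' be obtained from G by the extended reduced weighted struction at v. Let I be an independent set of G with v ∉ I, let c' ∈ C' with c' ⊆ I ∩ N(v), and suppose every vertex y ∈ (I ∩ N(v)) \ c' is adjacent in G to no vertex of c'. Then the set (I \ N(v)) ∪ {v_{c'}} ∪ {v_{c',y} : y ∈ (I ∩ N(v)) \ c'} is an independent set of G' and its weight in G' equals w(I) − w(v). -/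
/-!
Extended reduced weighted struction: applied at an arbitrary vertex `v`.
It removes `v` together with its whole neighborhood `N(v)`.  For every
independent set `c` of `G[N(v)]` with `w(c) > w(v)` all of whose proper
subsets have weight at most `w(v)` (the family `C'`), it adds a new vertex
`v_c` of weight `w(c) - w(v)` (the set `V_C`), and for every such `c` and
every `y ∈ N(v)` with `y ∉ c` that is adjacent to no vertex of `c` it adds
a new vertex `v_{c,y}` of weight `w(y)` (the set `V_E`), with the edges
described below.
-/

open scoped Classical

variable {V : Type*}

/-- let `I` be independent in `G` with `v ∉ I`, let
`c' ∈ C'` with `c' ⊆ I ∩ N(v)`, and assume every `y ∈ (I ∩ N(v)) \ c'` is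
adjacent in `G` to no vertex of `c'`.  Then
`(I \ N(v)) ∪ {v_{c'}} ∪ {v_{c',y} : y ∈ (I ∩ N(v)) \ c'}` is an independent
set of the extended reduced struction graph `G'`, of weight `w(I) - w(v)`
there. -/
theorem extended_reduced_struction_shift [Fintype V]
    (G : SimpleGraph V) (w : V → ℝ) (hw : ∀ u, 0 < w u) (v : V)
    (I : Finset V) (hI : IsIndep G I) (hvI : v ∉ I)
    (c' : Finset V) (hc' : CPred G w v c')
    (hsub : c' ⊆ I.filter fun y => G.Adj v y)
    (hfree : ∀ y ∈ (I.filter fun y => G.Adj v y) \ c', ∀ x ∈ c', ¬ G.Adj y x) :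
    IsIndep (redStruction G w v)
        (Finset.univ.filter
          (Sum.elim (fun u : ROld G v => u.val ∈ I)
            (Sum.elim (fun d : RVC G w v => d.val = c')
              (fun p : RVE G w v =>
                p.val.1 = c' ∧ p.val.2 ∈ (I.filter fun y => G.Adj v y) \ c')))) ∧
      ∑ a ∈ Finset.univ.filter
          (Sum.elim (fun u : ROld G v => u.val ∈ I)
            (Sum.elim (fun d : RVC G w v => d.val = c')
              (fun p : RVE G w v =>
                p.val.1 = c' ∧ p.val.2 ∈ (I.filter fun y => G.Adj v y) \ c'))),
          redWeight G w v a = (∑ x ∈ I, w x) - w v := by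
  classical
  have hcI : ∀ x ∈ c', x ∈ I := fun x hx => (Finset.mem_filter.mp (hsub hx)).1
  have hSI : ∀ y ∈ (I.filter fun y => G.Adj v y) \ c', y ∈ I := fun y hy =>
    (Finset.mem_filter.mp (Finset.mem_sdiff.mp hy).1).1
  constructor
  · intro a ha b hb hadj
    simp only [Finset.mem_filter, Finset.mem_univ, true_and] at ha hb
    have hne : a ≠ b := (redStruction G w v).ne_of_adj hadj
    have hrel : redRel G w v a b ∨ redRel G w v b a := by
      have h := hadj
      rw [redStruction, SimpleGraph.fromRel_adj] at h
      exact h.2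
    rcases a with u | d | p <;> rcases b with u' | d' | q <;>
      simp only [Sum.elim_inl, Sum.elim_inr] at ha hb <;>
      simp only [redRel] at hrel
    · rcases hrel with h | h
      · exact hI _ ha _ hb h
      · exact hI _ hb _ ha h
    · rcases hrel with ⟨x, hx, h⟩ | ⟨x, hx, h⟩ <;> rw [hb] at hx <;>
        exact hI _ ha _ (hcI x hx) h
    · rcases hrel with (h | ⟨x, hx, h⟩) | (h | ⟨x, hx, h⟩)
      · exact hI _ ha _ (hSI _ hb.2) h
      · rw [hb.1] at hx; exact hI _ ha _ (hcI x hx) h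
      · exact hI _ ha _ (hSI _ hb.2) h
      · rw [hb.1] at hx; exact hI _ ha _ (hcI x hx) h
    · rcases hrel with ⟨x, hx, h⟩ | ⟨x, hx, h⟩ <;> rw [ha] at hx <;>
        exact hI _ hb _ (hcI x hx) h
    · exact hne (by rw [Sum.inr.injEq, Sum.inl.injEq]; exact Subtype.ext (ha.trans hb.symm))
    · rcases hrel with h | h <;> exact h (ha.trans hb.1.symm)
    · rcases hrel with (h | ⟨x, hx, h⟩) | (h | ⟨x, hx, h⟩)
      · exact hI _ hb _ (hSI _ ha.2) h
      · rw [ha.1] at hx; exact hI _ hb _ (hcI x hx) h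
      · exact hI _ hb _ (hSI _ ha.2) h
      · rw [ha.1] at hx; exact hI _ hb _ (hcI x hx) h
    · rcases hrel with h | h <;> exact h (hb.trans ha.1.symm)
    · rcases hrel with (h | h) | (h | h)
      · exact h (ha.1.trans hb.1.symm)
      · exact hI _ (hSI _ ha.2) _ (hSI _ hb.2) h
      · exact h (hb.1.trans ha.1.symm)
      · exact hI _ (hSI _ hb.2) _ (hSI _ ha.2) h
  · rw [Finset.sum_filter, Fintype.sum_sum_type, Fintype.sum_sum_type]
    have h1 : (∑ u : ROld G v,
        if Sum.elim (fun u : ROld G v => u.val ∈ I)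
            (Sum.elim (fun d : RVC G w v => d.val = c')
              (fun p : RVE G w v =>
                p.val.1 = c' ∧ p.val.2 ∈ (I.filter fun y => G.Adj v y) \ c')) (Sum.inl u)
          then redWeight G w v (Sum.inl u) else 0)
        = ∑ y ∈ I.filter (fun y => ¬ G.Adj v y), w y := by
      simp only [Sum.elim_inl, redWeight]
      refine Eq.trans (Finset.sum_congr rfl fun (u : ROld G v) _ => (if hh : u.val ∈ I then (if_pos hh).trans (if_pos hh).symm
          else (if_neg hh).trans (if_neg hh).symm :
        _ = if u.val ∈ I then w u.val else 0)) ?_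
      rw [← Finset.sum_subtype (p := fun y : V => y ≠ v ∧ ¬ G.Adj v y)
        (Finset.univ.filter fun y : V => y ≠ v ∧ ¬ G.Adj v y)
        (fun x => by simp) (fun y => if y ∈ I then w y else 0)]
      rw [← Finset.sum_filter, Finset.filter_filter]
      apply Finset.sum_congr _ (fun _ _ => rfl)
      ext y
      simp only [Finset.mem_filter, Finset.mem_univ, true_and]
      constructor
      · rintro ⟨⟨_, h2⟩, h3⟩; exact ⟨h3, h2⟩
      · rintro ⟨h3, h2⟩
        exact ⟨⟨fun hy => hvI (hy ▸ h3), h2⟩, h3⟩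
    have h2 : (∑ d : RVC G w v,
        if Sum.elim (fun u : ROld G v => u.val ∈ I)
            (Sum.elim (fun d : RVC G w v => d.val = c')
              (fun p : RVE G w v =>
                p.val.1 = c' ∧ p.val.2 ∈ (I.filter fun y => G.Adj v y) \ c'))
            (Sum.inr (Sum.inl d))
          then redWeight G w v (Sum.inr (Sum.inl d)) else 0)
        = (∑ x ∈ c', w x) - w v := by
      rw [Finset.sum_eq_single (⟨c', hc'⟩ : RVC G w v)]
      · simp [redWeight]
      · intro b _ hb
        simp only [Sum.elim_inr, Sum.elim_inl]
        exact if_neg (fun h => hb (Subtype.ext h))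
      · intro h; exact absurd (Finset.mem_univ _) h
    have h3 : (∑ p : RVE G w v,
        if Sum.elim (fun u : ROld G v => u.val ∈ I)
            (Sum.elim (fun d : RVC G w v => d.val = c')
              (fun p : RVE G w v =>
                p.val.1 = c' ∧ p.val.2 ∈ (I.filter fun y => G.Adj v y) \ c'))
            (Sum.inr (Sum.inr p))
          then redWeight G w v (Sum.inr (Sum.inr p)) else 0)
        = ∑ y ∈ (I.filter fun y => G.Adj v y) \ c', w y := by
      simp only [Sum.elim_inr, redWeight]
      refine Eq.trans (Finset.sum_congr rfl fun (u : RVE G w v) _ => (if hh : u.val.1 = c' ∧ u.val.2 ∈ (I.filter fun y => G.Adj v y) \ c'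
          then (if_pos hh).trans (if_pos hh).symm else (if_neg hh).trans (if_neg hh).symm :
        _ = if u.val.1 = c' ∧ u.val.2 ∈ (I.filter fun y => G.Adj v y) \ c' then w u.val.2 else 0)) ?_
      rw [← Finset.sum_subtype (p := fun p : Finset V × V =>
          CPred G w v p.1 ∧ G.Adj v p.2 ∧ p.2 ∉ p.1 ∧ ∀ x ∈ p.1, ¬ G.Adj p.2 x)
        (Finset.univ.filter fun p : Finset V × V =>
          CPred G w v p.1 ∧ G.Adj v p.2 ∧ p.2 ∉ p.1 ∧ ∀ x ∈ p.1, ¬ G.Adj p.2 x)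
        (fun x => by simp)
        (fun q => if q.1 = c' ∧ q.2 ∈ (I.filter fun y => G.Adj v y) \ c' then w q.2 else 0)]
      rw [← Finset.sum_filter, Finset.filter_filter]
      have hset : (Finset.univ.filter fun q : Finset V × V =>
          (CPred G w v q.1 ∧ G.Adj v q.2 ∧ q.2 ∉ q.1 ∧ ∀ x ∈ q.1, ¬ G.Adj q.2 x) ∧
            q.1 = c' ∧ q.2 ∈ (I.filter fun y => G.Adj v y) \ c')
          = ((I.filter fun y => G.Adj v y) \ c').image (fun y => (c', y)) := by
        ext q
        simp only [Finset.mem_filter, Finset.mem_univ, true_and, Finset.mem_image]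
        constructor
        · rintro ⟨_, h1, h2⟩
          exact ⟨q.2, h2, by rw [← h1]⟩
        · rintro ⟨y, hy, rfl⟩
          exact ⟨⟨hc', (Finset.mem_filter.mp (Finset.mem_sdiff.mp hy).1).2,
            (Finset.mem_sdiff.mp hy).2, fun x hx => hfree y hy x hx⟩, rfl, hy⟩
      rw [hset, Finset.sum_image (fun y _ y' _ h => (Prod.mk.injEq _ _ _ _ ▸ h).2)]
    rw [h1, h2, h3]
    have hpart : ∑ y ∈ I.filter (fun y => G.Adj v y), w y
        + ∑ y ∈ I.filter (fun y => ¬ G.Adj v y), w y = ∑ x ∈ I, w x :=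
      Finset.sum_filter_add_sum_filter_not I _ w
    have hsplit : ∑ y ∈ (I.filter fun y => G.Adj v y) \ c', w y + ∑ x ∈ c', w x
        = ∑ y ∈ I.filter (fun y => G.Adj v y), w y :=
      Finset.sum_sdiff hsub
    linarith
end
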